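/- Let E = E(I₀,{n_k},{c_k},{ξ_{k,l}}) be a homogeneous perfect set satisfying the gap-comparability condition with constant χ ≥ 1, and {H_m}_{m≥0} the sequence from Lemma 4.1's construction. If dim_P E = 1, then there exists a subsequence {a_k}_{k≥0} of {m_k − 1}_{k≥0} such that lim_{k→∞} (l(H_{a_k}))^{1/a_k} = 1. -/

import Mathlib

open Set Filter Metric

noncomputable section

/-- A word `σ = σ₁⋯σ_k` is valid for the branching sequence `n` if `1 ≤ σ_j ≤ n j`
for every `1 ≤ j ≤ k`.  Words are represented as lists (read with 1-based indices). -/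
def ValidWord (n : ℕ → ℕ) (σ : List ℕ) : Prop :=
  ∀ j, j < σ.length → 1 ≤ σ.getD j 0 ∧ σ.getD j 0 ≤ n (j + 1)

/-- The conditions (1)–(4) of Definition 2.1: the family of closed intervals
`I_σ = [a σ, b σ]` (for `σ ∈ D`) has homogeneous perfect structure with parameters
`n`, `c`, `ξ`. -/
structure HPStruct (n : ℕ → ℕ) (c : ℕ → ℝ) (ξ : ℕ → ℕ → ℝ) (a b : List ℕ → ℝ) : Prop where
  /-- each `I_{σ*j}` is a subinterval of `I_σ` -/
  sub : ∀ σ : List ℕ, ValidWord n σ → ∀ j, 1 ≤ j → j ≤ n (σ.length + 1) →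
    Set.Icc (a (σ ++ [j])) (b (σ ++ [j])) ⊆ Set.Icc (a σ) (b σ)
  /-- `min I_{σ*(l+1)} ≥ max I_{σ*l}` -/
  ord : ∀ σ : List ℕ, ValidWord n σ → ∀ l, 1 ≤ l → l + 1 ≤ n (σ.length + 1) →
    b (σ ++ [l]) ≤ a (σ ++ [l + 1])
  /-- `|I_{σ*j}| / |I_σ| = c_k` -/
  ratio : ∀ σ : List ℕ, ValidWord n σ → ∀ j, 1 ≤ j → j ≤ n (σ.length + 1) →
    b (σ ++ [j]) - a (σ ++ [j]) = c (σ.length + 1) * (b σ - a σ)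
  /-- `min I_{σ*1} - min I_σ = ξ_{k,0}` -/
  gap0 : ∀ σ : List ℕ, ValidWord n σ → a (σ ++ [1]) - a σ = ξ (σ.length + 1) 0
  /-- `min I_{σ*(l+1)} - max I_{σ*l} = ξ_{k,l}` -/
  gapl : ∀ σ : List ℕ, ValidWord n σ → ∀ l, 1 ≤ l → l + 1 ≤ n (σ.length + 1) →
    a (σ ++ [l + 1]) - b (σ ++ [l]) = ξ (σ.length + 1) l
  /-- `max I_σ - max I_{σ*n_k} = ξ_{k,n_k}` -/
  gapn : ∀ σ : List ℕ, ValidWord n σ → b σ - b (σ ++ [n (σ.length + 1)]) =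
    ξ (σ.length + 1) (n (σ.length + 1))

/-- A homogeneous perfect set datum `E(I₀, {n_k}, {c_k}, {ξ_{k,l}})` of Definition 2.1:
a nondegenerate initial closed interval `I₀ = [a ∅, b ∅]`, integers `n_k ≥ 2`,
ratios `c_k > 0` with `n_k c_k < 1`, nonnegative gaps `ξ_{k,l}` (`0 ≤ l ≤ n_k`), and a
family of closed intervals `I_σ = [a σ, b σ]` with homogeneous perfect structure. -/
structure HPS where
  n : ℕ → ℕ
  c : ℕ → ℝ
  ξ : ℕ → ℕ → ℝ
  a : List ℕ → ℝ
  b : List ℕ → ℝ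
  hn : ∀ k, 1 ≤ k → 2 ≤ n k
  hc : ∀ k, 1 ≤ k → 0 < c k
  hnc : ∀ k, 1 ≤ k → (n k : ℝ) * c k < 1
  hξ : ∀ k, 1 ≤ k → ∀ l, l ≤ n k → 0 ≤ ξ k l
  hab : a [] < b []
  struct : HPStruct n c ξ a b

namespace HPS

variable (S : HPS)

/-- `E_k`, the union of the `k`-order basic intervals. -/
def Ek (k : ℕ) : Set ℝ :=
  ⋃ σ ∈ {σ : List ℕ | σ.length = k ∧ ValidWord S.n σ}, Set.Icc (S.a σ) (S.b σ)

/-- The homogeneous perfect set `E = ⋂_k E_k`. -/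
def E : Set ℝ := ⋂ k, S.Ek k

/-- Left endpoint of the trimmed interval `I_σ*` (for `σ ∈ D_k`):
`min I_σ* - min I_σ = ξ_{k+1,0}`. -/
def aStar (σ : List ℕ) : ℝ := S.a σ + S.ξ (σ.length + 1) 0

/-- Right endpoint of the trimmed interval `I_σ*`:
`max I_σ - max I_σ* = ξ_{k+1,n_{k+1}}`. -/
def bStar (σ : List ℕ) : ℝ := S.b σ - S.ξ (σ.length + 1) (S.n (σ.length + 1))

/-- `E_k* = ⋃_{σ ∈ D_k} I_σ*`. -/
def EkStar (k : ℕ) : Set ℝ :=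
  ⋃ σ ∈ {σ : List ℕ | σ.length = k ∧ ValidWord S.n σ}, Set.Icc (S.aStar σ) (S.bStar σ)

/-- `δ_k = |I_σ*|` for `σ ∈ D_k` (this common value is computed on the word `1⋯1`). -/
def delta (k : ℕ) : ℝ :=
  S.bStar (List.replicate k 1) - S.aStar (List.replicate k 1)

/-- `c_k* = δ_k / δ_{k-1}`. -/
def cStar (k : ℕ) : ℝ := S.delta k / S.delta (k - 1)

/-- `δ_k* = δ₀ c₁* ⋯ c_k*`. -/
def deltaStar (k : ℕ) : ℝ := S.delta 0 * ∏ j ∈ Finset.Icc 1 k, S.cStar j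

/-- `N_k* = n₁* ⋯ n_k* = n₁ ⋯ n_k`. -/
def Nstar (k : ℕ) : ℕ := ∏ j ∈ Finset.Icc 1 k, S.n j

/-- The reconstructed gap parameters: `ξ*_{k,l} = ξ_{k,l} + ξ_{k+1,0} + ξ_{k+1,n_{k+1}}`
for `1 ≤ l ≤ n_k - 1`, `ξ*_{k,0} = ξ_{k+1,0}`, `ξ*_{k,n_k} = ξ_{k+1,n_{k+1}}`. -/
def xiStar (k l : ℕ) : ℝ :=
  if l = 0 then S.ξ (k + 1) 0
  else if l = S.n k then S.ξ (k + 1) (S.n (k + 1))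
  else S.ξ k l + S.ξ (k + 1) 0 + S.ξ (k + 1) (S.n (k + 1))

/-- `α̲*_k = min_{1 ≤ l ≤ n_k - 1} ξ*_{k,l}`. -/
def alphaLo (k : ℕ) : ℝ := sInf ((fun l => S.xiStar k l) '' Set.Icc 1 (S.n k - 1))

/-- `α̅*_k = max_{1 ≤ l ≤ n_k - 1} ξ*_{k,l}`. -/
def alphaHi (k : ℕ) : ℝ := sSup ((fun l => S.xiStar k l) '' Set.Icc 1 (S.n k - 1))

end HPS

/-- The gap-comparability condition: `max_{1≤l≤n_k-1} ξ_{k,l} ≤ χ · min_{1≤l≤n_k-1} ξ_{k,l}`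
for every `k ≥ 1`. -/
def GapComparable (S : HPS) (χ : ℝ) : Prop :=
  ∀ k, 1 ≤ k → ∀ l l', 1 ≤ l → l ≤ S.n k - 1 → 1 ≤ l' → l' ≤ S.n k - 1 →
    S.ξ k l ≤ χ * S.ξ k l'

/-- `M = ⌊2χ⌋ + 1`. -/
def Mconst (χ : ℝ) : ℕ := ⌊2 * χ⌋₊ + 1

/-- `i_k`: equal to `1` if `n_k < M`, and otherwise the integer with `M^{i_k} ≤ n_k < M^{i_k+1}`. -/
def HPS.ik (S : HPS) (χ : ℝ) (k : ℕ) : ℕ := max 1 (Nat.log (Mconst χ) (S.n k))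

/-- `m_k = i₁ + ⋯ + i_k` (with `m₀ = 0`). -/
def HPS.mIdx (S : HPS) (χ : ℝ) (k : ℕ) : ℕ := ∑ l ∈ Finset.Icc 1 k, S.ik χ l

/-- For `m ≥ 1`, the index `k` with `m_{k-1} < m ≤ m_k`. -/
def HPS.kOf (S : HPS) (χ : ℝ) (m : ℕ) : ℕ := sInf {k | m ≤ S.mIdx χ k}

/-- The least number of closed `δ`-balls needed to cover `E` (`⊤` if no finite cover exists). -/
def coveringNumber (δ : ℝ) (E : Set ℝ) : ℕ∞ :=
  ⨅ (s : Finset ℝ) (_ : E ⊆ ⋃ x ∈ s, Metric.closedBall x δ), (s.card : ℕ∞)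

open Classical in
/-- Upper box(-counting) dimension:
`limsup_{δ→0⁺} log N_δ(E) / (-log δ)` (and `⊤` for sets with no finite cover). -/
def upperBoxDim (E : Set ℝ) : EReal :=
  if ∀ δ : ℝ, 0 < δ → coveringNumber δ E ≠ ⊤ then
    Filter.limsup
      (fun δ : ℝ =>
        ((Real.log ((coveringNumber δ E).toNat : ℝ) / (-Real.log δ) : ℝ) : EReal))
      (nhdsWithin 0 (Set.Ioi 0))
  else ⊤

/-- Packing dimension, via the modified upper box dimension:
`dim_P E = inf { sup_i ub-dim(F i) : E ⊆ ⋃ i, F i }`. -/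
def packingDim (E : Set ℝ) : EReal :=
  ⨅ (F : ℕ → Set ℝ) (_ : E ⊆ ⋃ i, F i), ⨆ i, upperBoxDim (F i)

/-- The data of the sequence `{H_m}` constructed in Lemma 4.1, with its characterizing
properties.  `Br m` is the finite set of branches of `H_m`, a branch being recorded by its
endpoints, and `H_m = ⋃_{p ∈ Br m} [p.1, p.2]`. -/
structure BranchSeq (S : HPS) (χ : ℝ) where
  Br : ℕ → Finset (ℝ × ℝ)
  /-- each `H_m` has at least one branch -/
  nonempty : ∀ m, (Br m).Nonempty
  /-- branches are nondegenerate closed intervals -/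
  lt : ∀ m, ∀ p ∈ Br m, p.1 < p.2
  /-- distinct branches of `H_m` have disjoint interiors -/
  disj : ∀ m, ∀ p ∈ Br m, ∀ q ∈ Br m, p ≠ q →
    Set.Ioo p.1 p.2 ∩ Set.Ioo q.1 q.2 = ∅
  /-- the sequence `H_m` is decreasing under inclusion -/
  dec : ∀ m, (⋃ p ∈ Br (m + 1), Set.Icc p.1 p.2) ⊆ ⋃ p ∈ Br m, Set.Icc p.1 p.2
  /-- every branch of `H_{m+1}` is contained in a branch of `H_m` -/
  nested : ∀ m, ∀ q ∈ Br (m + 1), ∃ p ∈ Br m, Set.Icc q.1 q.2 ⊆ Set.Icc p.1 p.2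
  /-- `E = ⋂_m H_m` -/
  interE : S.E = ⋂ m, ⋃ p ∈ Br m, Set.Icc p.1 p.2
  /-- `H_{m_k} = E_k*`, the branches being exactly the intervals `I_σ*`, `σ ∈ D_k` -/
  levels : ∀ k, (Br (S.mIdx χ k) : Set (ℝ × ℝ)) =
    {p : ℝ × ℝ | ∃ σ : List ℕ, σ.length = k ∧ ValidWord S.n σ ∧
      p = (S.aStar σ, S.bStar σ)}
  /-- each branch of `H_m` contains at most `M²` branches of `H_{m+1}` -/
  card_le : ∀ m, ∀ p ∈ Br m,
    {q ∈ (Br (m + 1) : Set (ℝ × ℝ)) | Set.Icc q.1 q.2 ⊆ Set.Icc p.1 p.2}.ncard ≤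
      (Mconst χ) ^ 2
  /-- for `m_{k-1} < m < m_k`, each branch of `H_{m-1}` contains exactly `M` branches of `H_m` -/
  exactM : ∀ k, 1 ≤ k → ∀ m, S.mIdx χ (k - 1) < m → m < S.mIdx χ k →
    ∀ p ∈ Br (m - 1),
      {q ∈ (Br m : Set (ℝ × ℝ)) | Set.Icc q.1 q.2 ⊆ Set.Icc p.1 p.2}.ncard = Mconst χ
  /-- for `m_{k-1} < m < m_k`, each branch of `H_m` is the convex hull of a block of
  consecutive intervals `I_σ*`, `σ ∈ D_k`: its endpoints are endpoints of such intervals -/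
  hull : ∀ k, 1 ≤ k → ∀ m, S.mIdx χ (k - 1) < m → m < S.mIdx χ k →
    ∀ p ∈ Br m, ∃ σ τ : List ℕ, σ.length = k ∧ τ.length = k ∧
      ValidWord S.n σ ∧ ValidWord S.n τ ∧ p.1 = S.aStar σ ∧ p.2 = S.bStar τ
  /-- `max_{I ∈ H_m} |I| ≤ 2χ · min_{I ∈ H_m} |I|` -/
  comparable : ∀ m, ∀ p ∈ Br m, ∀ q ∈ Br m, p.2 - p.1 ≤ 2 * χ * (q.2 - q.1)

namespace BranchSeq

variable {S : HPS} {χ : ℝ} (B : BranchSeq S χ)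

/-- `l(H_m)`, the total length of the branches of `H_m`. -/
def len (m : ℕ) : ℝ := ∑ p ∈ B.Br m, (p.2 - p.1)

/-- `max_{I branch of H_m} |I|`. -/
def maxLen (m : ℕ) : ℝ :=
  sSup ((fun p : ℝ × ℝ => p.2 - p.1) '' (B.Br m : Set (ℝ × ℝ)))

/-- `min_{I branch of H_m} |I|`. -/
def minLen (m : ℕ) : ℝ :=
  sInf ((fun p : ℝ × ℝ => p.2 - p.1) '' (B.Br m : Set (ℝ × ℝ)))

/-- `Λ(m) = max {|J|/|I| : I branch of H_{m-1}, J branch of H_m, J ⊆ I}`. -/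
def Lam (m : ℕ) : ℝ :=
  sSup {r : ℝ | ∃ p ∈ B.Br (m - 1), ∃ q ∈ B.Br m,
    Set.Icc q.1 q.2 ⊆ Set.Icc p.1 p.2 ∧ r = (q.2 - q.1) / (p.2 - p.1)}

/-- `λ(m) = min {|J|/|I| : I branch of H_{m-1}, J branch of H_m, J ⊆ I}`. -/
def lamSmall (m : ℕ) : ℝ :=
  sInf {r : ℝ | ∃ p ∈ B.Br (m - 1), ∃ q ∈ B.Br m,
    Set.Icc q.1 q.2 ⊆ Set.Icc p.1 p.2 ∧ r = (q.2 - q.1) / (p.2 - p.1)}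

/-- `γ(m) = α̲*_k / max_{I branch of H_{m-1}} |I|`, where `m_{k-1} < m ≤ m_k`. -/
def gam (m : ℕ) : ℝ := S.alphaLo (S.kOf χ m) / B.maxLen (m - 1)

/-- `Γ(m) = α̅*_k / min_{I branch of H_{m-1}} |I|`, where `m_{k-1} < m ≤ m_k`. -/
def Gam (m : ℕ) : ℝ := S.alphaHi (S.kOf χ m) / B.minLen (m - 1)

open Classical in
/-- `S_ε(m) = {j : 1 ≤ j ≤ m, γ(j) ≤ ε}`. -/
def Sfin (ε : ℝ) (m : ℕ) : Finset ℕ := (Finset.Icc 1 m).filter (fun j => B.gam j ≤ ε)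

open Classical in
/-- The branches of `H_{m+1}` contained in the branch `p` of `H_m`. -/
def children (m : ℕ) (p : ℝ × ℝ) : Finset (ℝ × ℝ) :=
  (B.Br (m + 1)).filter (fun q => p.1 ≤ q.1 ∧ q.2 ≤ p.2)

end BranchSeq


/-! ### Auxiliary development -/

section Aux

open Finset

lemma validWord_append {n : ℕ → ℕ} {σ : List ℕ} {j : ℕ}
    (hσ : ValidWord n σ) (h1 : 1 ≤ j) (h2 : j ≤ n (σ.length + 1)) :
    ValidWord n (σ ++ [j]) := by
  intro i hi
  simp only [List.length_append, List.length_cons, List.length_nil] at hi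
  rcases lt_or_ge i σ.length with h | h
  · rw [List.getD_append _ _ _ _ h]
    exact hσ i h
  · have hieq : i = σ.length := by omega
    subst hieq
    rw [List.getD_append_right _ _ _ _ le_rfl]
    simpa using ⟨h1, h2⟩

lemma validWord_prefix {n : ℕ → ℕ} {σ : List ℕ} {j : ℕ}
    (h : ValidWord n (σ ++ [j])) : ValidWord n σ := by
  intro i hi
  have h2 := h i (by simp only [List.length_append, List.length_cons, List.length_nil]; omega)
  rwa [List.getD_append _ _ _ _ hi] at h2

lemma validWord_last {n : ℕ → ℕ} {σ : List ℕ} {j : ℕ}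
    (h : ValidWord n (σ ++ [j])) : 1 ≤ j ∧ j ≤ n (σ.length + 1) := by
  have h2 := h σ.length (by simp)
  rwa [List.getD_append_right _ _ _ _ le_rfl, Nat.sub_self, List.getD_cons_zero] at h2

lemma validWord_nil (n : ℕ → ℕ) : ValidWord n [] := by
  intro j hj; simp at hj

namespace HPS

variable (S : HPS)

/-- common length of level-`k` basic intervals -/
def lenk (k : ℕ) : ℝ := (S.b [] - S.a []) * ∏ j ∈ Finset.Icc 1 k, S.c j

lemma lenk_pos (k : ℕ) : 0 < S.lenk k :=
  mul_pos (sub_pos.2 S.hab) (Finset.prod_pos fun i hi => S.hc i (Finset.mem_Icc.1 hi).1)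

lemma length_eq {σ : List ℕ} (h : ValidWord S.n σ) : S.b σ - S.a σ = S.lenk σ.length := by
  induction σ using List.reverseRecOn with
  | nil => simp [lenk]
  | append_singleton σ j ih =>
      have hσ : ValidWord S.n σ := validWord_prefix h
      obtain ⟨h1, h2⟩ := validWord_last h
      rw [S.struct.ratio σ hσ j h1 h2, ih hσ]
      have hl : (σ ++ [j]).length = σ.length + 1 := by simp
      rw [hl]
      unfold lenk
      rw [Finset.prod_Icc_succ_top (by omega : 1 ≤ σ.length + 1)]
      ring

lemma length_pos {σ : List ℕ} (h : ValidWord S.n σ) : S.a σ < S.b σ := by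
  have := S.lenk_pos σ.length
  rw [← S.length_eq h] at this
  linarith

lemma child_subset {σ : List ℕ} (h : ValidWord S.n σ) {j : ℕ}
    (h1 : 1 ≤ j) (h2 : j ≤ S.n (σ.length + 1)) :
    S.a σ ≤ S.a (σ ++ [j]) ∧ S.b (σ ++ [j]) ≤ S.b σ := by
  have hsub := S.struct.sub σ h j h1 h2
  have hne : S.a (σ ++ [j]) ≤ S.b (σ ++ [j]) :=
    (S.length_pos (validWord_append h h1 h2)).le
  exact (Set.Icc_subset_Icc_iff hne).1 hsub

lemma sibling_order {σ : List ℕ} (h : ValidWord S.n σ) {l l' : ℕ}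
    (h1 : 1 ≤ l) (hll : l < l') (h2 : l' ≤ S.n (σ.length + 1)) :
    S.b (σ ++ [l]) ≤ S.a (σ ++ [l']) := by
  induction l' with
  | zero => omega
  | succ m ih =>
      rcases Nat.lt_or_ge l m with hlm | hlm
      · have hm : m ≤ S.n (σ.length + 1) := by omega
        have h3 := ih hlm hm
        have h4 : S.a (σ ++ [m]) ≤ S.b (σ ++ [m]) :=
          (S.length_pos (validWord_append h (by omega) hm)).le
        have h5 := S.struct.ord σ h m (by omega) h2
        linarith
      · have : l = m := by omega
        subst this
        exact S.struct.ord σ h l h1 h2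

lemma extension_subset {σ ρ : List ℕ} (h : ValidWord S.n (σ ++ ρ)) :
    S.a σ ≤ S.a (σ ++ ρ) ∧ S.b (σ ++ ρ) ≤ S.b σ := by
  induction ρ using List.reverseRecOn with
  | nil => simp
  | append_singleton ρ j ih =>
      rw [← List.append_assoc] at h
      have hpre : ValidWord S.n (σ ++ ρ) := validWord_prefix h
      obtain ⟨h1, h2⟩ := validWord_last h
      have hc := S.child_subset hpre h1 h2
      have := ih hpre
      constructor
      · rw [← List.append_assoc]; linarith [hc.1, this.1]
      · rw [← List.append_assoc]; linarith [hc.2, this.2]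

lemma ioo_disj_of_le {a1 b1 a2 b2 : ℝ} (h : b1 ≤ a2) :
    Set.Ioo a1 b1 ∩ Set.Ioo a2 b2 = ∅ := by
  rw [Set.eq_empty_iff_forall_notMem]
  rintro x ⟨⟨_, hx1⟩, ⟨hx2, _⟩⟩
  linarith

lemma interior_disjoint : ∀ (k : ℕ) (σ τ : List ℕ), σ.length = k → τ.length = k →
    ValidWord S.n σ → ValidWord S.n τ → σ ≠ τ →
    Set.Ioo (S.a σ) (S.b σ) ∩ Set.Ioo (S.a τ) (S.b τ) = ∅ := by
  intro k
  induction k with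
  | zero =>
      intro σ τ hσ hτ _ _ hne
      rw [List.length_eq_zero_iff] at hσ hτ
      exact absurd (hσ.trans hτ.symm) hne
  | succ k ih =>
      intro σ τ hσl hτl hσ hτ hne
      rcases List.eq_nil_or_concat σ with rfl | ⟨σ', j, hc1⟩
      · simp at hσl
      rw [List.concat_eq_append] at hc1
      subst hc1
      rcases List.eq_nil_or_concat τ with rfl | ⟨τ', j', hc2⟩
      · simp at hτl
      rw [List.concat_eq_append] at hc2
      subst hc2
      have hσ'l : σ'.length = k := by simp at hσl; omega
      have hτ'l : τ'.length = k := by simp at hτl; omega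
      have hσ' : ValidWord S.n σ' := validWord_prefix hσ
      have hτ' : ValidWord S.n τ' := validWord_prefix hτ
      obtain ⟨hj1, hj2⟩ := validWord_last hσ
      obtain ⟨hj'1, hj'2⟩ := validWord_last hτ
      by_cases hστ : σ' = τ'
      · subst hστ
        have hjj : j ≠ j' := fun hc => hne (by rw [hc])
        rcases lt_or_gt_of_ne hjj with hlt | hgt
        · exact ioo_disj_of_le (S.sibling_order hσ' hj1 hlt hj'2)
        · rw [Set.inter_comm]
          exact ioo_disj_of_le (S.sibling_order hσ' hj'1 hgt hj2)
      · -- distinct parents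
        by_contra hcon
        rw [← Set.not_nonempty_iff_eq_empty, not_not] at hcon
        rw [Set.Ioo_inter_Ioo] at hcon
        obtain ⟨x, hx⟩ := hcon
        have hmaxmin : max (S.a (σ' ++ [j])) (S.a (τ' ++ [j'])) <
            min (S.b (σ' ++ [j])) (S.b (τ' ++ [j'])) := hx.1.trans hx.2
        obtain ⟨x1, hx1, hx1'⟩ := exists_between hmaxmin
        obtain ⟨x2, hx2, hx2'⟩ := exists_between hx1'
        have hIH := ih σ' τ' hσ'l hτ'l hσ' hτ' hστ
        -- x1 < x2 both lie in Icc σ' ∩ Icc τ'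
        have hsubσ := S.child_subset hσ' hj1 hj2
        have hsubτ := S.child_subset hτ' hj'1 hj'2
        have hx1σ : S.a σ' ≤ x1 := le_trans (le_trans hsubσ.1 (le_max_left _ _)) hx1.le
        have hx2σ : x2 < S.b σ' := lt_of_lt_of_le (lt_of_lt_of_le hx2' (min_le_left _ _)) hsubσ.2
        have hx1τ : S.a τ' ≤ x1 := le_trans (le_trans hsubτ.1 (le_max_right _ _)) hx1.le
        have hx2τ : x2 < S.b τ' := lt_of_lt_of_le (lt_of_lt_of_le hx2' (min_le_right _ _)) hsubτ.2
        have : Set.Ioo x1 x2 ⊆ Set.Ioo (S.a σ') (S.b σ') ∩ Set.Ioo (S.a τ') (S.b τ') := by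
          intro y hy
          exact ⟨⟨lt_of_le_of_lt hx1σ hy.1, hy.2.trans hx2σ⟩,
                 ⟨lt_of_le_of_lt hx1τ hy.1, hy.2.trans hx2τ⟩⟩
        rw [hIH, Set.subset_empty_iff, Set.Ioo_eq_empty_iff] at this
        exact this hx2

lemma validWord_replicate (S : HPS) (k : ℕ) : ValidWord S.n (List.replicate k 1) := by
  intro j hj
  rw [List.getD_eq_getElem?_getD]
  simp only [List.length_replicate] at hj
  rw [List.getElem?_replicate]
  simp only [if_pos hj, Option.getD_some]
  exact ⟨le_rfl, le_trans (by norm_num) (S.hn (j + 1) (by omega))⟩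

/-- common length of level-`k` trimmed intervals `I_σ*` -/
def dstar (k : ℕ) : ℝ := S.lenk k - S.ξ (k + 1) 0 - S.ξ (k + 1) (S.n (k + 1))

lemma aStar_eq {σ : List ℕ} (h : ValidWord S.n σ) : S.aStar σ = S.a (σ ++ [1]) := by
  have := S.struct.gap0 σ h
  unfold aStar
  linarith

lemma bStar_eq {σ : List ℕ} (h : ValidWord S.n σ) :
    S.bStar σ = S.b (σ ++ [S.n (σ.length + 1)]) := by
  have := S.struct.gapn σ h
  unfold bStar
  linarith

lemma bStar_sub_aStar {σ : List ℕ} (h : ValidWord S.n σ) :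
    S.bStar σ - S.aStar σ = S.dstar σ.length := by
  have hlen := S.length_eq h
  unfold bStar aStar dstar
  linarith

lemma delta_eq (k : ℕ) : S.delta k = S.dstar k := by
  unfold delta
  have h := S.bStar_sub_aStar (S.validWord_replicate k)
  rwa [List.length_replicate] at h

/-- telescoping: `b (σ ++ [r]) - a (σ ++ [1])` -/
lemma telescope_b_a {σ : List ℕ} (h : ValidWord S.n σ) :
    ∀ r, 1 ≤ r → r ≤ S.n (σ.length + 1) →
    S.b (σ ++ [r]) - S.a (σ ++ [1]) =
      (∑ l ∈ Finset.Icc 1 (r - 1), S.ξ (σ.length + 1) l) + r * S.lenk (σ.length + 1) := by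
  intro r
  induction r with
  | zero => omega
  | succ m ih =>
      intro _ hr2
      rcases Nat.lt_or_ge m 1 with hm | hm
      · -- m = 0, r = 1
        have hm0 : m = 0 := by omega
        subst hm0
        have hv : ValidWord S.n (σ ++ [0 + 1]) := validWord_append h (by omega) hr2
        have hlen := S.length_eq hv
        simp only [List.length_append, List.length_cons, List.length_nil] at hlen
        have hempty : Finset.Icc 1 (0 + 1 - 1) = (∅ : Finset ℕ) := by
          apply Finset.Icc_eq_empty; omega
        rw [hempty]
        simp only [Finset.sum_empty, zero_add]
        norm_num
        linarith
      · have hm2 : m ≤ S.n (σ.length + 1) := by omega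
        have hIH := ih hm hm2
        have hgap := S.struct.gapl σ h m hm hr2
        have hlen := S.length_eq (validWord_append h (by omega : 1 ≤ m + 1) hr2)
        simp only [List.length_append, List.length_cons, List.length_nil] at hlen
        have hsum : ∑ l ∈ Finset.Icc 1 (m + 1 - 1), S.ξ (σ.length + 1) l =
            (∑ l ∈ Finset.Icc 1 (m - 1), S.ξ (σ.length + 1) l) + S.ξ (σ.length + 1) m := by
          rw [show m + 1 - 1 = (m - 1) + 1 by omega]
          rw [Finset.sum_Icc_succ_top (by omega : 1 ≤ m - 1 + 1)]
          rw [show m - 1 + 1 = m by omega]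
        rw [hsum]
        push_cast
        linarith

lemma dstar_eq_sum' {σ : List ℕ} (h : ValidWord S.n σ) :
    S.dstar σ.length = (∑ l ∈ Finset.Icc 1 (S.n (σ.length + 1) - 1), S.ξ (σ.length + 1) l) +
      (S.n (σ.length + 1) : ℝ) * S.lenk (σ.length + 1) := by
  have hn2 : 2 ≤ S.n (σ.length + 1) := S.hn _ (by omega)
  have htel := S.telescope_b_a h (S.n (σ.length + 1)) (by omega) le_rfl
  have h1 := S.bStar_sub_aStar h
  rw [S.aStar_eq h, S.bStar_eq h] at h1
  linarith

lemma dstar_eq_sum (k : ℕ) :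
    S.dstar k = (∑ l ∈ Finset.Icc 1 (S.n (k + 1) - 1), S.ξ (k + 1) l) +
      (S.n (k + 1) : ℝ) * S.lenk (k + 1) := by
  have h := S.dstar_eq_sum' (S.validWord_replicate k)
  rwa [List.length_replicate] at h

lemma dstar_pos (k : ℕ) : 0 < S.dstar k := by
  rw [S.dstar_eq_sum k]
  have hn2 : 2 ≤ S.n (k + 1) := S.hn (k + 1) (by omega)
  have h1 : 0 ≤ ∑ l ∈ Finset.Icc 1 (S.n (k + 1) - 1), S.ξ (k + 1) l :=
    Finset.sum_nonneg fun l hl => S.hξ (k + 1) (by omega) l (by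
      have := Finset.mem_Icc.1 hl; omega)
  have h2 : 0 < (S.n (k + 1) : ℝ) * S.lenk (k + 1) :=
    mul_pos (by positivity) (S.lenk_pos (k + 1))
  linarith

lemma xi_border_nonneg (k : ℕ) : 0 ≤ S.ξ (k + 1) 0 ∧ 0 ≤ S.ξ (k + 1) (S.n (k + 1)) :=
  ⟨S.hξ (k + 1) (by omega) 0 (by omega), S.hξ (k + 1) (by omega) _ le_rfl⟩

lemma dstar_le_lenk (k : ℕ) : S.dstar k ≤ S.lenk k := by
  obtain ⟨h1, h2⟩ := S.xi_border_nonneg k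
  unfold dstar
  linarith

/-- the gap between consecutive trimmed children equals `ξ*` -/
lemma gapStar {σ : List ℕ} (h : ValidWord S.n σ) {l : ℕ} (h1 : 1 ≤ l)
    (h2 : l + 1 ≤ S.n (σ.length + 1)) :
    S.aStar (σ ++ [l + 1]) - S.bStar (σ ++ [l]) = S.xiStar (σ.length + 1) l := by
  have hgap := S.struct.gapl σ h l h1 h2
  have hll : (σ ++ [l]).length = σ.length + 1 := by simp
  have hll' : (σ ++ [l + 1]).length = σ.length + 1 := by simp
  unfold aStar bStar xiStar
  rw [hll, hll']
  rw [if_neg (by omega), if_neg (by omega)]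
  linarith

/-- telescoping for trimmed intervals -/
lemma telescope_star {σ : List ℕ} (h : ValidWord S.n σ) :
    ∀ j₁ j₀, 1 ≤ j₀ → j₀ ≤ j₁ → j₁ ≤ S.n (σ.length + 1) →
    S.bStar (σ ++ [j₁]) - S.aStar (σ ++ [j₀]) =
      (∑ l ∈ Finset.Icc j₀ (j₁ - 1), S.xiStar (σ.length + 1) l) +
      ((j₁ - j₀ + 1 : ℕ) : ℝ) * S.dstar (σ.length + 1) := by
  intro j₁
  induction j₁ with
  | zero => omega
  | succ m ih =>
      intro j₀ h0 h01 h2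
      rcases Nat.lt_or_ge m j₀ with hm | hm
      · -- j₀ = m + 1
        have : j₀ = m + 1 := by omega
        subst this
        have hv : ValidWord S.n (σ ++ [m + 1]) := validWord_append h (by omega) h2
        have hd := S.bStar_sub_aStar hv
        rw [show (σ ++ [m + 1]).length = σ.length + 1 by simp] at hd
        rw [Finset.Icc_eq_empty_of_lt (by omega : m + 1 - 1 < m + 1)]
        simp only [Finset.sum_empty, zero_add, Nat.sub_self, Nat.zero_add,
          Nat.cast_one, one_mul]
        linarith
      · have hIH := ih j₀ h0 hm (by omega)
        have hgapS := S.gapStar h (le_trans h0 hm) h2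
        have hv : ValidWord S.n (σ ++ [m + 1]) := validWord_append h (by omega) h2
        have hd := S.bStar_sub_aStar hv
        rw [show (σ ++ [m + 1]).length = σ.length + 1 by simp] at hd
        have hsum : ∑ l ∈ Finset.Icc j₀ (m + 1 - 1), S.xiStar (σ.length + 1) l =
            (∑ l ∈ Finset.Icc j₀ (m - 1), S.xiStar (σ.length + 1) l) +
              S.xiStar (σ.length + 1) m := by
          rw [show m + 1 - 1 = (m - 1) + 1 by omega]
          rw [Finset.sum_Icc_succ_top (by omega : j₀ ≤ m - 1 + 1)]
          rw [show m - 1 + 1 = m by omega]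
        rw [hsum]
        have hcast : ((m + 1 - j₀ + 1 : ℕ) : ℝ) = ((m - j₀ + 1 : ℕ) : ℝ) + 1 := by
          have : m + 1 - j₀ + 1 = (m - j₀ + 1) + 1 := by omega
          rw [this]; push_cast; ring
        rw [hcast]
        linarith

/-- trimmed child is inside the trimmed parent -/
lemma starChild_subset {σ : List ℕ} (h : ValidWord S.n σ) {j : ℕ}
    (h1 : 1 ≤ j) (h2 : j ≤ S.n (σ.length + 1)) :
    S.aStar σ ≤ S.aStar (σ ++ [j]) ∧ S.bStar (σ ++ [j]) ≤ S.bStar σ := by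
  have hv : ValidWord S.n (σ ++ [j]) := validWord_append h h1 h2
  have hb0 : 0 ≤ S.ξ ((σ ++ [j]).length + 1) 0 :=
    S.hξ _ (by omega) 0 (by omega)
  have hbn : 0 ≤ S.ξ ((σ ++ [j]).length + 1) (S.n ((σ ++ [j]).length + 1)) :=
    S.hξ _ (by omega) _ le_rfl
  constructor
  · rw [S.aStar_eq h]
    have haj : S.a (σ ++ [1]) ≤ S.a (σ ++ [j]) := by
      rcases Nat.lt_or_ge 1 j with hj | hj
      · have h3 := S.sibling_order h le_rfl hj h2
        have h4 : S.a (σ ++ [1]) ≤ S.b (σ ++ [1]) :=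
          (S.length_pos (validWord_append h le_rfl (by omega))).le
        linarith
      · have : j = 1 := by omega
        subst this; rfl
    unfold aStar
    linarith
  · rw [S.bStar_eq h]
    have hbj : S.b (σ ++ [j]) ≤ S.b (σ ++ [S.n (σ.length + 1)]) := by
      rcases Nat.lt_or_ge j (S.n (σ.length + 1)) with hj | hj
      · have h3 := S.sibling_order h h1 hj le_rfl
        have h4 : S.a (σ ++ [S.n (σ.length + 1)]) ≤ S.b (σ ++ [S.n (σ.length + 1)]) :=
          (S.length_pos (validWord_append h (by omega) le_rfl)).le
        linarith
      · have : j = S.n (σ.length + 1) := by omega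
        subst this; rfl
    unfold bStar
    linarith

lemma star_in_base {σ : List ℕ} (h : ValidWord S.n σ) :
    S.a σ ≤ S.aStar σ ∧ S.bStar σ ≤ S.b σ := by
  have hb0 : 0 ≤ S.ξ (σ.length + 1) 0 := S.hξ _ (by omega) 0 (by omega)
  have hbn : 0 ≤ S.ξ (σ.length + 1) (S.n (σ.length + 1)) := S.hξ _ (by omega) _ le_rfl
  unfold aStar bStar
  constructor <;> linarith

lemma star_interior_disjoint {k : ℕ} {σ τ : List ℕ} (hσl : σ.length = k)
    (hτl : τ.length = k) (hσ : ValidWord S.n σ) (hτ : ValidWord S.n τ) (hne : σ ≠ τ) :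
    Set.Ioo (S.aStar σ) (S.bStar σ) ∩ Set.Ioo (S.aStar τ) (S.bStar τ) = ∅ := by
  have h1 := S.star_in_base hσ
  have h2 := S.star_in_base hτ
  have hd := S.interior_disjoint k σ τ hσl hτl hσ hτ hne
  rw [← Set.subset_empty_iff, ← hd]
  exact Set.inter_subset_inter (Set.Ioo_subset_Ioo h1.1 h1.2) (Set.Ioo_subset_Ioo h2.1 h2.2)

lemma starPair_injective {k : ℕ} {σ τ : List ℕ} (hσl : σ.length = k)
    (hτl : τ.length = k) (hσ : ValidWord S.n σ) (hτ : ValidWord S.n τ)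
    (heq : S.aStar σ = S.aStar τ ∧ S.bStar σ = S.bStar τ) : σ = τ := by
  by_contra hne
  have hd := S.star_interior_disjoint hσl hτl hσ hτ hne
  have hlt : S.aStar σ < S.bStar σ := by
    have := S.dstar_pos k
    have h2 := S.bStar_sub_aStar hσ
    rw [hσl] at h2
    linarith
  obtain ⟨x, hx⟩ := Set.nonempty_Ioo.2 hlt
  have : x ∈ Set.Ioo (S.aStar σ) (S.bStar σ) ∩ Set.Ioo (S.aStar τ) (S.bStar τ) := by
    refine ⟨hx, ?_⟩
    rw [← heq.1, ← heq.2]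
    exact hx
  rw [hd] at this
  exact this

end HPS

/-- the finset of valid words of length `k` -/
def HPS.WordF (T : HPS) : ℕ → Finset (List ℕ)
  | 0 => {[]}
  | (k + 1) => ((T.WordF k) ×ˢ Finset.Icc 1 (T.n (k + 1))).image fun q => q.1 ++ [q.2]

namespace HPS

variable (S : HPS)

lemma mem_WordF {k : ℕ} {σ : List ℕ} :
    σ ∈ S.WordF k ↔ σ.length = k ∧ ValidWord S.n σ := by
  induction k generalizing σ with
  | zero =>
      simp only [WordF, Finset.mem_singleton]
      constructor
      · rintro rfl; exact ⟨rfl, validWord_nil _⟩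
      · rintro ⟨h, _⟩; exact List.length_eq_zero_iff.1 h
  | succ k ih =>
      simp only [WordF, Finset.mem_image, Finset.mem_product]
      constructor
      · rintro ⟨⟨ρ, j⟩, ⟨hρ, hj⟩, rfl⟩
        obtain ⟨hρl, hρv⟩ := ih.1 hρ
        have hj' : 1 ≤ j ∧ j ≤ S.n (k + 1) := by
          simpa using Finset.mem_Icc.1 (by simpa using hj)
        exact ⟨by simp [hρl], validWord_append hρv hj'.1 (by rw [hρl]; exact hj'.2)⟩
      · rintro ⟨hl, hv⟩
        rcases List.eq_nil_or_concat σ with rfl | ⟨ρ, j, hc⟩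
        · simp at hl
        rw [List.concat_eq_append] at hc
        subst hc
        have hρl : ρ.length = k := by simp at hl; omega
        have hρv : ValidWord S.n ρ := validWord_prefix hv
        obtain ⟨hj1, hj2⟩ := validWord_last hv
        exact ⟨(ρ, j), ⟨ih.2 ⟨hρl, hρv⟩, Finset.mem_Icc.2 ⟨hj1, by rwa [hρl] at hj2⟩⟩, rfl⟩

lemma card_WordF_succ (k : ℕ) :
    (S.WordF (k + 1)).card = (S.WordF k).card * S.n (k + 1) := by
  rw [WordF]
  rw [Finset.card_image_of_injOn, Finset.card_product, Nat.card_Icc,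
    Nat.add_sub_cancel]
  rintro ⟨ρ, j⟩ _ ⟨ρ', j'⟩ _ heq
  simp only at heq
  obtain ⟨h1, h2⟩ := List.append_inj' heq rfl
  simp only [List.cons.injEq] at h2
  simp [h1, h2.1]

lemma wordSet_eq (k : ℕ) :
    {σ : List ℕ | σ.length = k ∧ ValidWord S.n σ} = ↑(S.WordF k) := by
  ext σ
  simp [S.mem_WordF]

end HPS

namespace BranchSeq

open MeasureTheory

variable {S : HPS} {χ : ℝ} (B : BranchSeq S χ)

/-- the set `H_m` -/
def Hset (m : ℕ) : Set ℝ := ⋃ p ∈ B.Br m, Set.Icc p.1 p.2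

lemma vol_inter_zero {p q : ℝ × ℝ}
    (h : Set.Ioo p.1 p.2 ∩ Set.Ioo q.1 q.2 = ∅) :
    volume (Set.Icc p.1 p.2 ∩ Set.Icc q.1 q.2) = 0 := by
  rw [Set.Icc_inter_Icc, Real.volume_Icc]
  rw [Set.Ioo_inter_Ioo] at h
  have hle : min p.2 q.2 ≤ max p.1 q.1 := by
    by_contra hlt
    push_neg at hlt
    exact (Set.nonempty_Ioo.2 hlt).ne_empty h
  rw [ENNReal.ofReal_eq_zero]
  linarith

lemma volume_Hset (m : ℕ) : volume (B.Hset m) = ENNReal.ofReal (B.len m) := by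
  have hmeas : ∀ p ∈ B.Br m, NullMeasurableSet (Set.Icc p.1 p.2) volume :=
    fun p _ => measurableSet_Icc.nullMeasurableSet
  have hd : (↑(B.Br m) : Set (ℝ × ℝ)).Pairwise
      (Function.onFun (MeasureTheory.AEDisjoint volume) fun p : ℝ × ℝ => Set.Icc p.1 p.2) := by
    intro p hp q hq hne
    exact vol_inter_zero (B.disj m p (by simpa using hp) q (by simpa using hq) hne)
  rw [Hset, measure_biUnion_finset₀ hd hmeas]
  have : ∀ p ∈ B.Br m, volume (Set.Icc p.1 p.2) = ENNReal.ofReal (p.2 - p.1) :=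
    fun p _ => Real.volume_Icc
  rw [Finset.sum_congr rfl this, len,
    ← ENNReal.ofReal_sum_of_nonneg fun p hp => (sub_pos.2 (B.lt m p hp)).le]

lemma len_nonneg (m : ℕ) : 0 ≤ B.len m :=
  Finset.sum_nonneg fun p hp => (sub_pos.2 (B.lt m p hp)).le

lemma len_pos (m : ℕ) : 0 < B.len m :=
  Finset.sum_pos (fun p hp => sub_pos.2 (B.lt m p hp)) (B.nonempty m)

lemma branch_le_len {m : ℕ} {p : ℝ × ℝ} (hp : p ∈ B.Br m) : p.2 - p.1 ≤ B.len m :=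
  Finset.single_le_sum (fun q hq => (sub_pos.2 (B.lt m q hq)).le) hp

lemma Hset_antitone {m m' : ℕ} (h : m ≤ m') : B.Hset m' ⊆ B.Hset m := by
  induction m' with
  | zero => rw [Nat.le_zero.1 h]
  | succ m'' ih =>
      rcases Nat.lt_or_ge m (m'' + 1) with h1 | h1
      · exact (B.dec m'').trans (ih (by omega))
      · rw [Nat.le_antisymm h (by omega)]

lemma len_antitone {m m' : ℕ} (h : m ≤ m') : B.len m' ≤ B.len m := by
  have h2 : volume (B.Hset m') ≤ volume (B.Hset m) := measure_mono (B.Hset_antitone h)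
  rw [B.volume_Hset, B.volume_Hset] at h2
  exact (ENNReal.ofReal_le_ofReal_iff (B.len_nonneg m)).1 h2

lemma E_subset_Hset (m : ℕ) : S.E ⊆ B.Hset m := by
  rw [B.interE]
  exact Set.iInter_subset _ m

/-- each branch of `H_{m'}` is contained in a branch of `H_m` for `m ≤ m'` -/
lemma nested_chain {m m' : ℕ} (h : m ≤ m') :
    ∀ q ∈ B.Br m', ∃ p ∈ B.Br m, Set.Icc q.1 q.2 ⊆ Set.Icc p.1 p.2 := by
  induction m' with
  | zero =>
      rw [Nat.le_zero.1 h]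
      exact fun q hq => ⟨q, hq, subset_rfl⟩
  | succ m'' ih =>
      rcases Nat.lt_or_ge m (m'' + 1) with h1 | h1
      · intro q hq
        obtain ⟨r, hr, hqr⟩ := B.nested m'' q hq
        obtain ⟨p, hp, hrp⟩ := ih (by omega) r hr
        exact ⟨p, hp, hqr.trans hrp⟩
      · rw [Nat.le_antisymm h (by omega)]
        exact fun q hq => ⟨q, hq, subset_rfl⟩

lemma card_Br_le_of_bound {m : ℕ} {C : ℕ}
    (hC : ∀ p ∈ B.Br m,
      {q ∈ (B.Br (m + 1) : Set (ℝ × ℝ)) | Set.Icc q.1 q.2 ⊆ Set.Icc p.1 p.2}.ncard ≤ C) :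
    (B.Br (m + 1)).card ≤ C * (B.Br m).card := by
  classical
  set f : ℝ × ℝ → ℝ × ℝ := fun q =>
    if h : ∃ p ∈ B.Br m, Set.Icc q.1 q.2 ⊆ Set.Icc p.1 p.2 then h.choose else q with hf
  have hfmem : ∀ q ∈ B.Br (m + 1), f q ∈ B.Br m ∧
      Set.Icc q.1 q.2 ⊆ Set.Icc (f q).1 (f q).2 := by
    intro q hq
    have hex : ∃ p ∈ B.Br m, Set.Icc q.1 q.2 ⊆ Set.Icc p.1 p.2 := B.nested m q hq
    rw [hf]
    simp only [dif_pos hex]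
    exact ⟨hex.choose_spec.1, hex.choose_spec.2⟩
  rw [Finset.card_eq_sum_card_fiberwise (fun q hq => (hfmem q hq).1)]
  have hbd : ∀ p ∈ B.Br m,
      ((B.Br (m + 1)).filter (fun q => f q = p)).card ≤ C := by
    intro p hp
    have hsub : (↑((B.Br (m + 1)).filter (fun q => f q = p)) : Set (ℝ × ℝ)) ⊆
        {q ∈ (B.Br (m + 1) : Set (ℝ × ℝ)) | Set.Icc q.1 q.2 ⊆ Set.Icc p.1 p.2} := by
      intro q hq
      simp only [Finset.coe_filter, Set.mem_setOf_eq] at hq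
      refine ⟨hq.1, ?_⟩
      have := (hfmem q hq.1).2
      rwa [hq.2] at this
    calc ((B.Br (m + 1)).filter (fun q => f q = p)).card
        = (↑((B.Br (m + 1)).filter (fun q => f q = p)) : Set (ℝ × ℝ)).ncard :=
          (Set.ncard_coe_finset _).symm
      _ ≤ {q ∈ (B.Br (m + 1) : Set (ℝ × ℝ)) | Set.Icc q.1 q.2 ⊆ Set.Icc p.1 p.2}.ncard :=
          Set.ncard_le_ncard hsub ((B.Br (m + 1)).finite_toSet.subset fun q hq => hq.1)
      _ ≤ C := hC p hp
  calc ∑ p ∈ B.Br m, ((B.Br (m + 1)).filter (fun q => f q = p)).card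
      ≤ ∑ _p ∈ B.Br m, C := Finset.sum_le_sum hbd
    _ = C * (B.Br m).card := by rw [Finset.sum_const, smul_eq_mul, mul_comm]

lemma card_Br_succ_le (m : ℕ) :
    (B.Br (m + 1)).card ≤ (Mconst χ) ^ 2 * (B.Br m).card :=
  B.card_Br_le_of_bound (B.card_le m)

lemma levels_image (k : ℕ) : (B.Br (S.mIdx χ k) : Set (ℝ × ℝ)) =
    (fun σ => (S.aStar σ, S.bStar σ)) '' {σ : List ℕ | σ.length = k ∧ ValidWord S.n σ} := by
  rw [B.levels k]
  ext p
  simp only [Set.mem_setOf_eq, Set.mem_image]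
  constructor
  · rintro ⟨σ, h1, h2, h3⟩; exact ⟨σ, ⟨h1, h2⟩, h3.symm⟩
  · rintro ⟨σ, ⟨h1, h2⟩, h3⟩; exact ⟨σ, h1, h2, h3.symm⟩

lemma card_Br_level (k : ℕ) : (B.Br (S.mIdx χ k)).card = (S.WordF k).card := by
  have h := B.levels_image k
  rw [S.wordSet_eq] at h
  have hinj : Set.InjOn (fun σ => (S.aStar σ, S.bStar σ)) ↑(S.WordF k) := by
    intro σ hσ τ hτ heq
    rw [Finset.mem_coe, S.mem_WordF] at hσ hτ
    simp only [Prod.mk.injEq] at heq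
    exact S.starPair_injective hσ.1 hτ.1 hσ.2 hτ.2 heq
  calc (B.Br (S.mIdx χ k)).card = (B.Br (S.mIdx χ k) : Set (ℝ × ℝ)).ncard :=
        (Set.ncard_coe_finset _).symm
    _ = ((fun σ => (S.aStar σ, S.bStar σ)) '' ↑(S.WordF k)).ncard := by rw [h]
    _ = (↑(S.WordF k) : Set (List ℕ)).ncard := Set.ncard_image_of_injOn hinj
    _ = (S.WordF k).card := Set.ncard_coe_finset _

lemma len_level (k : ℕ) :
    B.len (S.mIdx χ k) = (S.WordF k).card * S.dstar k := by
  have h : ∀ p ∈ B.Br (S.mIdx χ k), p.2 - p.1 = S.dstar k := by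
    intro p hp
    have hp' : p ∈ (B.Br (S.mIdx χ k) : Set (ℝ × ℝ)) := hp
    rw [B.levels k] at hp'
    obtain ⟨σ, h1, h2, h3⟩ := hp'
    rw [h3]
    simpa only [h1] using S.bStar_sub_aStar h2
  rw [len, Finset.sum_congr rfl h, Finset.sum_const, nsmul_eq_mul,
    B.card_Br_level k]

lemma card_Br_zero : (B.Br 0).card = 1 := by
  have h : S.mIdx χ 0 = 0 := by
    unfold HPS.mIdx
    rw [Finset.Icc_eq_empty_of_lt (by omega), Finset.sum_empty]
  have h2 := B.levels_image 0
  rw [h] at h2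
  have h3 : {σ : List ℕ | σ.length = 0 ∧ ValidWord S.n σ} = {[]} := by
    ext σ
    simp only [Set.mem_setOf_eq, Set.mem_singleton_iff, List.length_eq_zero_iff]
    exact ⟨fun h => h.1, fun h => ⟨h, h ▸ validWord_nil S.n⟩⟩
  rw [h3, Set.image_singleton] at h2
  rw [← Set.ncard_coe_finset, h2, Set.ncard_singleton]

lemma card_Br_le_pow (m : ℕ) : (B.Br m).card ≤ (Mconst χ) ^ (2 * m) := by
  induction m with
  | zero => simp [B.card_Br_zero]
  | succ m ih =>
      calc (B.Br (m + 1)).card ≤ (Mconst χ) ^ 2 * (B.Br m).card := B.card_Br_succ_le m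
        _ ≤ (Mconst χ) ^ 2 * (Mconst χ) ^ (2 * m) := Nat.mul_le_mul_left _ ih
        _ = (Mconst χ) ^ (2 * (m + 1)) := by rw [← pow_add]; ring_nf

end BranchSeq

section MIdx

variable (S : HPS) (χ : ℝ)

lemma ik_pos (k : ℕ) : 1 ≤ S.ik χ k := le_max_left _ _

lemma mIdx_succ (k : ℕ) : S.mIdx χ (k + 1) = S.mIdx χ k + S.ik χ (k + 1) := by
  unfold HPS.mIdx
  rw [Finset.sum_Icc_succ_top (by omega : 1 ≤ k + 1)]

lemma le_mIdx (k : ℕ) : k ≤ S.mIdx χ k := by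
  induction k with
  | zero => omega
  | succ k ih =>
      rw [mIdx_succ]
      have := ik_pos S χ (k + 1)
      omega

lemma mIdx_strictMono : StrictMono (S.mIdx χ) := by
  apply strictMono_nat_of_lt_succ
  intro k
  rw [mIdx_succ]
  have := ik_pos S χ (k + 1)
  omega

lemma Mconst_ge_three (hχ : 1 ≤ χ) : 3 ≤ Mconst χ := by
  unfold Mconst
  have : (2 : ℕ) ≤ ⌊2 * χ⌋₊ := Nat.le_floor (by push_cast; linarith)
  omega

lemma pow_ik_le_n (k : ℕ) (hk : 1 ≤ k) (h2 : 2 ≤ S.ik χ k) :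
    (Mconst χ) ^ (S.ik χ k) ≤ S.n k := by
  have hlog : 2 ≤ Nat.log (Mconst χ) (S.n k) := by
    by_contra h
    push_neg at h
    have : S.ik χ k ≤ 1 := by unfold HPS.ik; omega
    omega
  have hik : S.ik χ k = Nat.log (Mconst χ) (S.n k) := by
    unfold HPS.ik; omega
  rw [hik]
  exact Nat.pow_log_le_self _ (by have := S.hn k hk; omega)

end MIdx

namespace HPS

variable (S : HPS)

lemma xiStar_eq_of_mid {k l : ℕ} (hk : 1 ≤ k) (h1 : 1 ≤ l) (h2 : l ≤ S.n k - 1) :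
    S.xiStar k l = S.ξ k l + (S.ξ (k + 1) 0 + S.ξ (k + 1) (S.n (k + 1))) := by
  have hn := S.hn k hk
  unfold xiStar
  rw [if_neg (by omega), if_neg (by omega)]
  ring

lemma xiStar_nonneg (k : ℕ) (hk : 1 ≤ k) {l : ℕ} (h1 : 1 ≤ l) (h2 : l ≤ S.n k - 1) :
    0 ≤ S.xiStar k l := by
  have hn := S.hn k hk
  rw [S.xiStar_eq_of_mid hk h1 h2]
  have h3 := S.hξ k hk l (by omega)
  obtain ⟨hb1, hb2⟩ := S.xi_border_nonneg k
  linarith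

lemma alphaLo_le_xiStar (k : ℕ) {l : ℕ} (h1 : 1 ≤ l) (h2 : l ≤ S.n k - 1) :
    S.alphaLo k ≤ S.xiStar k l := by
  apply csInf_le
  · exact (((Set.finite_Icc 1 (S.n k - 1)).image _)).bddBelow
  · exact Set.mem_image_of_mem _ (Set.mem_Icc.2 ⟨h1, h2⟩)

lemma alphaLo_mem (k : ℕ) (hk : 1 ≤ k) :
    ∃ l, 1 ≤ l ∧ l ≤ S.n k - 1 ∧ S.alphaLo k = S.xiStar k l := by
  have hn := S.hn k hk
  have hne : ((fun l => S.xiStar k l) '' Set.Icc 1 (S.n k - 1)).Nonempty :=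
    ⟨S.xiStar k 1, Set.mem_image_of_mem _ (Set.mem_Icc.2 ⟨le_rfl, by omega⟩)⟩
  have hfin : ((fun l => S.xiStar k l) '' Set.Icc 1 (S.n k - 1)).Finite :=
    (Set.finite_Icc _ _).image _
  obtain ⟨l, hl, he⟩ := hne.csInf_mem hfin
  rw [Set.mem_Icc] at hl
  exact ⟨l, hl.1, hl.2, he.symm⟩

lemma alphaLo_nonneg (k : ℕ) (hk : 1 ≤ k) : 0 ≤ S.alphaLo k := by
  obtain ⟨l, h1, h2, he⟩ := S.alphaLo_mem k hk
  rw [he]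
  exact S.xiStar_nonneg k hk h1 h2

lemma xiStar_le_chi_alphaLo {χ : ℝ} (hgap : GapComparable S χ) (hχ : 1 ≤ χ) (k : ℕ)
    (hk : 1 ≤ k) {l : ℕ} (h1 : 1 ≤ l) (h2 : l ≤ S.n k - 1) :
    S.xiStar k l ≤ χ * S.alphaLo k := by
  have hn := S.hn k hk
  obtain ⟨l₀, hl₀1, hl₀2, he⟩ := S.alphaLo_mem k hk
  rw [he, S.xiStar_eq_of_mid hk h1 h2, S.xiStar_eq_of_mid hk hl₀1 hl₀2]
  have hg := hgap k hk l l₀ h1 h2 hl₀1 hl₀2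
  obtain ⟨hb1, hb2⟩ := S.xi_border_nonneg k
  have hB : 0 ≤ S.ξ (k + 1) 0 + S.ξ (k + 1) (S.n (k + 1)) := by linarith
  have h4 : S.ξ (k + 1) 0 + S.ξ (k + 1) (S.n (k + 1)) ≤
      χ * (S.ξ (k + 1) 0 + S.ξ (k + 1) (S.n (k + 1))) := le_mul_of_one_le_left hB hχ
  have h5 : 0 ≤ S.ξ k l₀ := S.hξ k hk l₀ (by omega)
  nlinarith

end HPS

namespace BranchSeq

variable {S : HPS} {χ : ℝ} (B : BranchSeq S χ)

/-- key counting estimate: total word count minus branch count, times the minimal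
gap `α̲*_{k+1}`, bounds the total length `l(H_{m_{k+1}-1})` from below. -/
lemma fiber_bound (k : ℕ) :
    (((S.WordF (k + 1)).card : ℝ) - ((B.Br (S.mIdx χ (k + 1) - 1)).card : ℝ)) *
      S.alphaLo (k + 1) ≤ B.len (S.mIdx χ (k + 1) - 1) := by
  classical
  set a' := S.mIdx χ (k + 1) - 1 with ha'
  have hmk1 : 1 ≤ S.mIdx χ (k + 1) := le_trans (by omega) (le_mIdx S χ (k + 1))
  have haa : a' + 1 = S.mIdx χ (k + 1) := by omega
  have hmka : S.mIdx χ k ≤ a' := by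
    have h1 := mIdx_succ S χ k
    have h2 := ik_pos S χ (k + 1)
    omega
  have hg0 : 0 ≤ S.alphaLo (k + 1) := S.alphaLo_nonneg (k + 1) (by omega)
  set F : List ℕ → ℝ × ℝ := fun τ =>
    if h : ∃ p ∈ B.Br a', Set.Icc (S.aStar τ) (S.bStar τ) ⊆ Set.Icc p.1 p.2
    then h.choose else (0, 0) with hFdef
  have hF : ∀ τ ∈ S.WordF (k + 1), F τ ∈ B.Br a' ∧
      Set.Icc (S.aStar τ) (S.bStar τ) ⊆ Set.Icc (F τ).1 (F τ).2 := by
    intro τ hτ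
    obtain ⟨hτl, hτv⟩ := S.mem_WordF.1 hτ
    have hblock : (S.aStar τ, S.bStar τ) ∈ (B.Br (S.mIdx χ (k + 1)) : Set (ℝ × ℝ)) := by
      rw [B.levels (k + 1)]
      exact ⟨τ, hτl, hτv, rfl⟩
    have hex : ∃ p ∈ B.Br a', Set.Icc (S.aStar τ) (S.bStar τ) ⊆ Set.Icc p.1 p.2 :=
      B.nested a' (S.aStar τ, S.bStar τ) (by rw [haa]; exact hblock)
    rw [hFdef]
    simp only [dif_pos hex]
    exact ⟨hex.choose_spec.1, hex.choose_spec.2⟩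
  have hper : ∀ p ∈ B.Br a',
      (((S.WordF (k + 1)).filter (fun τ => F τ = p)).card : ℝ) * S.alphaLo (k + 1) ≤
        (p.2 - p.1) + S.alphaLo (k + 1) := by
    intro p hp
    set fib := (S.WordF (k + 1)).filter (fun τ => F τ = p) with hfib
    rcases Finset.eq_empty_or_nonempty fib with hemp | hne
    · rw [hemp]
      simp only [Finset.card_empty, Nat.cast_zero, zero_mul]
      have := B.lt a' p hp
      linarith
    obtain ⟨P, hP, hpP⟩ := B.nested_chain hmka p hp
    have hP' : P ∈ (B.Br (S.mIdx χ k) : Set (ℝ × ℝ)) := hP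
    rw [B.levels k] at hP'
    obtain ⟨γ₀, hγ₀l, hγ₀v, hPe⟩ := hP'
    have hdecomp : ∀ τ ∈ fib, ∃ j, 1 ≤ j ∧ j ≤ S.n (k + 1) ∧ τ = γ₀ ++ [j] ∧
        Set.Icc (S.aStar (γ₀ ++ [j])) (S.bStar (γ₀ ++ [j])) ⊆ Set.Icc p.1 p.2 := by
      intro τ hτ
      rw [hfib, Finset.mem_filter] at hτ
      obtain ⟨hτW, hτF⟩ := hτ
      obtain ⟨hτl, hτv⟩ := S.mem_WordF.1 hτW
      have hblockp : Set.Icc (S.aStar τ) (S.bStar τ) ⊆ Set.Icc p.1 p.2 := by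
        have h6 := (hF τ hτW).2
        rwa [hτF] at h6
      rcases List.eq_nil_or_concat τ with rfl | ⟨ρ, j, hc⟩
      · simp at hτl
      rw [List.concat_eq_append] at hc
      subst hc
      have hρl : ρ.length = k := by simp at hτl; omega
      have hρv := validWord_prefix hτv
      obtain ⟨hj1, hj2⟩ := validWord_last hτv
      rw [hρl] at hj2
      have hρeq : ρ = γ₀ := by
        by_contra hneq
        have hsub1 := S.starChild_subset hρv hj1 (by rw [hρl]; exact hj2)
        have hnd : S.aStar (ρ ++ [j]) < S.bStar (ρ ++ [j]) := by
          have h1 := S.bStar_sub_aStar hτv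
          have h2 := S.dstar_pos (k + 1)
          rw [hτl] at h1
          linarith
        have hPsub : Set.Icc (S.aStar (ρ ++ [j])) (S.bStar (ρ ++ [j])) ⊆
            Set.Icc (S.aStar γ₀) (S.bStar γ₀) := by
          rw [hPe] at hpP
          exact hblockp.trans hpP
        have hγbounds := (Set.Icc_subset_Icc_iff hnd.le).1 hPsub
        have hdisj := S.star_interior_disjoint hρl hγ₀l hρv hγ₀v hneq
        obtain ⟨x, hx⟩ := Set.nonempty_Ioo.2 hnd
        have hxx : x ∈ Set.Ioo (S.aStar ρ) (S.bStar ρ) ∩ Set.Ioo (S.aStar γ₀) (S.bStar γ₀) :=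
          ⟨⟨lt_of_le_of_lt hsub1.1 hx.1, lt_of_lt_of_le hx.2 hsub1.2⟩,
           ⟨lt_of_le_of_lt hγbounds.1 hx.1, lt_of_lt_of_le hx.2 hγbounds.2⟩⟩
        rw [hdisj] at hxx
        exact hxx
      subst hρeq
      exact ⟨j, hj1, hj2, rfl, hblockp⟩
    set J := fib.image (fun τ => τ.getLastD 0) with hJ
    have hJcard : J.card = fib.card := by
      apply Finset.card_image_of_injOn
      intro τ hτ τ' hτ' heq
      obtain ⟨j, _, _, hje, _⟩ := hdecomp τ hτ
      obtain ⟨j', _, _, hje', _⟩ := hdecomp τ' hτ'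
      rw [hje, hje'] at heq ⊢
      have e1 : (γ₀ ++ [j]).getLastD 0 = j := List.getLastD_concat
      have e2 : (γ₀ ++ [j']).getLastD 0 = j' := List.getLastD_concat
      simp only at heq
      rw [e1, e2] at heq
      rw [heq]
    have hJne : J.Nonempty := hne.image _
    set j0 := J.min' hJne with hj0def
    set j1 := J.max' hJne with hj1def
    have hmemJ : ∀ jj ∈ J, 1 ≤ jj ∧ jj ≤ S.n (k + 1) ∧
        Set.Icc (S.aStar (γ₀ ++ [jj])) (S.bStar (γ₀ ++ [jj])) ⊆ Set.Icc p.1 p.2 := by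
      intro jj hjj
      rw [hJ, Finset.mem_image] at hjj
      obtain ⟨τ, hτ, hτe⟩ := hjj
      obtain ⟨j, h1, h2, hje, h3⟩ := hdecomp τ hτ
      have hjeq : jj = j := by
        rw [← hτe, hje, List.getLastD_concat]
      subst hjeq
      exact ⟨h1, h2, h3⟩
    obtain ⟨hj01, hj0n, hj0s⟩ := hmemJ j0 (J.min'_mem hJne)
    obtain ⟨hj11, hj1n, hj1s⟩ := hmemJ j1 (J.max'_mem hJne)
    have hj01le : j0 ≤ j1 := J.min'_le _ (J.max'_mem hJne)
    have hJle : J.card ≤ j1 - j0 + 1 := by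
      have hJIcc : J ⊆ Finset.Icc j0 j1 := fun jj hjj =>
        Finset.mem_Icc.2 ⟨J.min'_le _ hjj, J.le_max' _ hjj⟩
      calc J.card ≤ (Finset.Icc j0 j1).card := Finset.card_le_card hJIcc
        _ = j1 - j0 + 1 := by rw [Nat.card_Icc]; omega
    have htel := S.telescope_star hγ₀v j1 j0 hj01 hj01le (by rw [hγ₀l]; exact hj1n)
    rw [hγ₀l] at htel
    have hsumge : (((j1 - j0 : ℕ)) : ℝ) * S.alphaLo (k + 1) ≤
        ∑ l ∈ Finset.Icc j0 (j1 - 1), S.xiStar (k + 1) l := by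
      have hcard : (Finset.Icc j0 (j1 - 1)).card = j1 - j0 := by
        rw [Nat.card_Icc]; omega
      have h7 := Finset.card_nsmul_le_sum (Finset.Icc j0 (j1 - 1))
        (fun l => S.xiStar (k + 1) l) (S.alphaLo (k + 1)) (fun l hl => by
          rw [Finset.mem_Icc] at hl
          exact S.alphaLo_le_xiStar (k + 1) (by omega) (by
            have hn2 := S.hn (k + 1) (by omega); omega))
      rw [hcard, nsmul_eq_mul] at h7
      exact h7
    have hndeg0 : S.aStar (γ₀ ++ [j0]) ≤ S.bStar (γ₀ ++ [j0]) := by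
      have h1 := S.bStar_sub_aStar (validWord_append hγ₀v hj01 (by rw [hγ₀l]; exact hj0n))
      have h2 := S.dstar_pos ((γ₀ ++ [j0]).length)
      linarith
    have hbounds0 := (Set.Icc_subset_Icc_iff hndeg0).1 hj0s
    have hndeg1 : S.aStar (γ₀ ++ [j1]) ≤ S.bStar (γ₀ ++ [j1]) := by
      have h1 := S.bStar_sub_aStar (validWord_append hγ₀v hj11 (by rw [hγ₀l]; exact hj1n))
      have h2 := S.dstar_pos ((γ₀ ++ [j1]).length)
      linarith
    have hbounds1 := (Set.Icc_subset_Icc_iff hndeg1).1 hj1s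
    have hdpos : (0:ℝ) ≤ ((j1 - j0 + 1 : ℕ) : ℝ) * S.dstar (k + 1) := by
      have := S.dstar_pos (k + 1)
      positivity
    have hspan : (((j1 - j0 : ℕ)) : ℝ) * S.alphaLo (k + 1) ≤ p.2 - p.1 := by
      have h8 : S.bStar (γ₀ ++ [j1]) - S.aStar (γ₀ ++ [j0]) ≤ p.2 - p.1 := by
        have := hbounds0.1
        have := hbounds1.2
        linarith
      linarith [htel, hsumge]
    have hfibcard : (fib.card : ℝ) ≤ ((j1 - j0 : ℕ) : ℝ) + 1 := by
      have : fib.card ≤ (j1 - j0) + 1 := hJcard ▸ hJle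
      exact_mod_cast this
    calc (fib.card : ℝ) * S.alphaLo (k + 1)
        ≤ (((j1 - j0 : ℕ) : ℝ) + 1) * S.alphaLo (k + 1) :=
          mul_le_mul_of_nonneg_right hfibcard hg0
      _ = ((j1 - j0 : ℕ) : ℝ) * S.alphaLo (k + 1) + S.alphaLo (k + 1) := by ring
      _ ≤ (p.2 - p.1) + S.alphaLo (k + 1) := by linarith
  have hsum := Finset.card_eq_sum_card_fiberwise (fun τ hτ => (hF τ hτ).1)
  have hcast : ((S.WordF (k + 1)).card : ℝ) =
      ∑ p ∈ B.Br a', (((S.WordF (k + 1)).filter (fun τ => F τ = p)).card : ℝ) := by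
    rw [hsum]
    push_cast
    rfl
  have hmain : ((S.WordF (k + 1)).card : ℝ) * S.alphaLo (k + 1) ≤
      B.len a' + ((B.Br a').card : ℝ) * S.alphaLo (k + 1) := by
    calc ((S.WordF (k + 1)).card : ℝ) * S.alphaLo (k + 1)
        = ∑ p ∈ B.Br a',
            (((S.WordF (k + 1)).filter (fun τ => F τ = p)).card : ℝ) * S.alphaLo (k + 1) := by
          rw [hcast, Finset.sum_mul]
      _ ≤ ∑ p ∈ B.Br a', ((p.2 - p.1) + S.alphaLo (k + 1)) := Finset.sum_le_sum hper
      _ = B.len a' + ((B.Br a').card : ℝ) * S.alphaLo (k + 1) := by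
          rw [Finset.sum_add_distrib, Finset.sum_const, nsmul_eq_mul]
          rfl
  nlinarith [hmain]

/-- during the intermediate steps, the branch count multiplies by `M` each step -/
lemma card_Br_pred_level (k : ℕ) :
    (B.Br (S.mIdx χ (k + 1) - 1)).card ≤
      (S.WordF k).card * (Mconst χ) ^ (S.ik χ (k + 1) - 1) := by
  have hstep : ∀ r, S.mIdx χ k + r ≤ S.mIdx χ (k + 1) - 1 →
      (B.Br (S.mIdx χ k + r)).card ≤ (S.WordF k).card * (Mconst χ) ^ r := by
    intro r
    induction r with
    | zero => intro _; simpa using (B.card_Br_level k).le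
    | succ r ih =>
        intro hr
        have hik := ik_pos S χ (k + 1)
        have hms := mIdx_succ S χ k
        have hmk1 : 1 ≤ S.mIdx χ (k + 1) := le_trans (by omega) (le_mIdx S χ (k + 1))
        have h2 : S.mIdx χ k + r + 1 < S.mIdx χ (k + 1) := by omega
        have hex := B.exactM (k + 1) (by omega) (S.mIdx χ k + r + 1)
          (by simp only [Nat.add_sub_cancel]; omega) h2
        have hbound : (B.Br (S.mIdx χ k + r + 1)).card ≤
            Mconst χ * (B.Br (S.mIdx χ k + r)).card := by
          apply B.card_Br_le_of_bound
          intro p hp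
          have h3 := hex p (by simpa using hp)
          exact le_of_eq h3
        calc (B.Br (S.mIdx χ k + r + 1)).card
            ≤ Mconst χ * (B.Br (S.mIdx χ k + r)).card := hbound
          _ ≤ Mconst χ * ((S.WordF k).card * (Mconst χ) ^ r) :=
              Nat.mul_le_mul_left _ (ih (by omega))
          _ = (S.WordF k).card * (Mconst χ) ^ (r + 1) := by ring
  have hik := ik_pos S χ (k + 1)
  have hms := mIdx_succ S χ k
  have h4 := hstep (S.ik χ (k + 1) - 1) (by omega)
  have heq : S.mIdx χ k + (S.ik χ (k + 1) - 1) = S.mIdx χ (k + 1) - 1 := by omega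
  rwa [heq] at h4

end BranchSeq

namespace BranchSeq

variable {S : HPS} {χ : ℝ} (B : BranchSeq S χ)

lemma arith_T1 {N nr Bc g L χ : ℝ} (hχ : 1 ≤ χ) (hN0 : 0 ≤ N) (hn2 : 2 ≤ nr)
    (hg0 : 0 ≤ g) (hL0 : 0 ≤ L) (hBc : Bc ≤ N * (nr / 3))
    (hfb : (N * nr - Bc) * g ≤ L) :
    N * ((nr - 1) * (χ * g)) ≤ (3 / 2) * χ * L := by
  have s : N * (nr - 1) ≤ (3 / 2) * (N * nr - Bc) := by nlinarith
  have s2 : N * (nr - 1) * g ≤ (3 / 2) * (N * nr - Bc) * g :=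
    mul_le_mul_of_nonneg_right s hg0
  have s3 : (3 / 2) * (N * nr - Bc) * g ≤ (3 / 2) * L := by linarith
  have s4 : N * (nr - 1) * g ≤ (3 / 2) * L := le_trans s2 s3
  calc N * ((nr - 1) * (χ * g)) = χ * (N * (nr - 1) * g) := by ring
    _ ≤ χ * ((3 / 2) * L) := mul_le_mul_of_nonneg_left s4 (by linarith)
    _ = (3 / 2) * χ * L := by ring

set_option maxHeartbeats 1000000 in
/-- **Main decay estimate.** If `l(H_{m_k-1}) ≤ t^{m_k-1}` holds for all `k ≥ K`,
then `l(H_m) ≤ (2+2χ) t^m` for all `m ≥ m_K`. -/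
lemma len_le_pow (hχ : 1 ≤ χ) (hgap : GapComparable S χ)
    {t : ℝ} (ht1 : 1 / 2 ≤ t) (ht2 : t < 1) {K : ℕ} (hK : 1 ≤ K)
    (hyp : ∀ k, K ≤ k → B.len (S.mIdx χ k - 1) ≤ t ^ (S.mIdx χ k - 1))
    {m : ℕ} (hm : S.mIdx χ K ≤ m) :
    B.len m ≤ (2 + 2 * χ) * t ^ m := by
  classical
  have ht0 : 0 < t := by linarith
  have hM3 : 3 ≤ Mconst χ := Mconst_ge_three χ hχ
  have hKm : K ≤ m := le_trans (le_mIdx S χ K) hm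
  obtain ⟨k, hPk, hkK, hlt⟩ : ∃ k, S.mIdx χ k ≤ m ∧ K ≤ k ∧ m < S.mIdx χ (k + 1) := by
    refine ⟨Nat.findGreatest (fun j => S.mIdx χ j ≤ m) m,
      Nat.findGreatest_spec (P := fun j => S.mIdx χ j ≤ m) hKm hm,
      Nat.le_findGreatest (P := fun j => S.mIdx χ j ≤ m) hKm hm, ?_⟩
    rcases Nat.lt_or_ge m (Nat.findGreatest (fun j => S.mIdx χ j ≤ m) m + 1) with h | h
    · exact lt_of_lt_of_le h (le_mIdx S χ _)
    · by_contra hcon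
      push_neg at hcon
      have h5 := Nat.le_findGreatest (P := fun j => S.mIdx χ j ≤ m) h hcon
      omega
  have hmk1 : 1 ≤ S.mIdx χ k := le_trans (by omega) (le_mIdx S χ k)
  have hma : m ≤ S.mIdx χ (k + 1) - 1 := by omega
  rcases eq_or_lt_of_le hPk with heq | hltk
  · -- m = mIdx χ k
    have h1 : B.len m ≤ t ^ (S.mIdx χ k - 1) := by
      refine le_trans ?_ (hyp k hkK)
      exact B.len_antitone (by omega)
    have h3 : t ^ (S.mIdx χ k - 1) ≤ 2 * t ^ m := by
      have hmm : m = (S.mIdx χ k - 1) + 1 := by omega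
      rw [hmm, pow_succ]
      nlinarith [pow_pos ht0 (S.mIdx χ k - 1)]
    have h4 : 2 * t ^ m ≤ (2 + 2 * χ) * t ^ m := by
      nlinarith [pow_pos ht0 m]
    linarith
  · -- intermediate case: mIdx k < m < mIdx (k+1)
    have hik2 : 2 ≤ S.ik χ (k + 1) := by
      have h5 := mIdx_succ S χ k
      omega
    set i := S.ik χ (k + 1) with hi
    set n := S.n (k + 1) with hnn
    have hn2 : 2 ≤ n := S.hn (k + 1) (by omega)
    set N := ((S.WordF k).card : ℝ) with hN
    set g := S.alphaLo (k + 1) with hg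
    set d := S.dstar (k + 1) with hd
    set a' := S.mIdx χ (k + 1) - 1 with ha'
    have hg0 : 0 ≤ g := S.alphaLo_nonneg (k + 1) (by omega)
    have hd0 : 0 < d := S.dstar_pos (k + 1)
    have hN0 : (0:ℝ) ≤ N := Nat.cast_nonneg _
    have hlena'0 : 0 ≤ B.len a' := B.len_nonneg a'
    have hlena' : B.len a' ≤ t ^ a' := hyp (k + 1) (by omega)
    -- (1) len m ≤ N * dstar k
    have h1 : B.len m ≤ N * S.dstar k := by
      have h6 := B.len_antitone hltk.le
      rwa [B.len_level k] at h6
    -- decomposition of N * dstar k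
    set Δ := S.ξ (k + 2) 0 + S.ξ (k + 2) (S.n (k + 2)) with hΔ
    have hΔ0 : 0 ≤ Δ := by
      obtain ⟨u, v⟩ := S.xi_border_nonneg (k + 1)
      exact add_nonneg u v
    have hlen1 : S.lenk (k + 1) = d + Δ := by
      rw [hd, hΔ]
      unfold HPS.dstar
      ring
    have hcastn : ((n - 1 : ℕ) : ℝ) = (n : ℝ) - 1 := by
      rw [Nat.cast_sub (by omega : 1 ≤ n)]
      norm_num
    have hxiStar_sum : ∑ l ∈ Finset.Icc 1 (n - 1), S.xiStar (k + 1) l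
        = (∑ l ∈ Finset.Icc 1 (n - 1), S.ξ (k + 1) l) + ((n : ℝ) - 1) * Δ := by
      have h7 : ∀ l ∈ Finset.Icc 1 (n - 1), S.xiStar (k + 1) l = S.ξ (k + 1) l + Δ := by
        intro l hl
        rw [Finset.mem_Icc] at hl
        exact S.xiStar_eq_of_mid (by omega) hl.1 hl.2
      rw [Finset.sum_congr rfl h7, Finset.sum_add_distrib, Finset.sum_const, nsmul_eq_mul,
        Nat.card_Icc]
      congr 1
      rw [show n - 1 + 1 - 1 = n - 1 by omega, hcastn]
    have hid : N * S.dstar k =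
        N * (∑ l ∈ Finset.Icc 1 (n - 1), S.xiStar (k + 1) l) + N * n * d + N * Δ := by
      rw [S.dstar_eq_sum k, hxiStar_sum, hlen1]
      ring
    -- T1
    have hsum_le : ∑ l ∈ Finset.Icc 1 (n - 1), S.xiStar (k + 1) l ≤
        ((n : ℝ) - 1) * (χ * g) := by
      have h8 := Finset.sum_le_card_nsmul (Finset.Icc 1 (n - 1))
        (fun l => S.xiStar (k + 1) l) (χ * g) (fun l hl => by
          rw [Finset.mem_Icc] at hl
          exact S.xiStar_le_chi_alphaLo hgap hχ (k + 1) (by omega) hl.1 hl.2)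
      rw [Nat.card_Icc, show n - 1 + 1 - 1 = n - 1 by omega, nsmul_eq_mul, hcastn] at h8
      exact h8
    have hWc : ((S.WordF (k + 1)).card : ℝ) = N * n := by
      rw [hN, S.card_WordF_succ k]
      push_cast
      rfl
    have hfb := B.fiber_bound k
    rw [hWc] at hfb
    have hBc : ((B.Br a').card : ℝ) ≤ N * (Mconst χ : ℝ) ^ (i - 1) := by
      have h9 := B.card_Br_pred_level k
      have h10 : ((B.Br a').card : ℝ) ≤
          (((S.WordF k).card * (Mconst χ) ^ (S.ik χ (k + 1) - 1) : ℕ) : ℝ) := by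
        exact_mod_cast h9
      rw [Nat.cast_mul, Nat.cast_pow] at h10
      exact h10
    have hMn : ((Mconst χ : ℝ)) ^ i ≤ (n : ℝ) := by
      have h11 := pow_ik_le_n S χ (k + 1) (by omega) hik2
      exact_mod_cast h11
    have hM3' : (3:ℝ) ≤ (Mconst χ : ℝ) := by exact_mod_cast hM3
    have hMi : (Mconst χ : ℝ) ^ (i - 1) ≤ (n : ℝ) / 3 := by
      have h12 : (Mconst χ : ℝ) ^ (i - 1) * 3 ≤ (Mconst χ : ℝ) ^ (i - 1) * (Mconst χ : ℝ) := by
        apply mul_le_mul_of_nonneg_left hM3' (by positivity)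
      have h13 : (Mconst χ : ℝ) ^ (i - 1) * (Mconst χ : ℝ) = (Mconst χ : ℝ) ^ i := by
        rw [← pow_succ]
        congr 1
        omega
      rw [h13] at h12
      linarith
    have hBc3 : ((B.Br a').card : ℝ) ≤ N * ((n : ℝ) / 3) := by
      have h14 := mul_le_mul_of_nonneg_left hMi hN0
      linarith [hBc]
    have harith := arith_T1 hχ hN0 (by exact_mod_cast hn2) hg0 hlena'0 hBc3 hfb
    have hT1 : N * (∑ l ∈ Finset.Icc 1 (n - 1), S.xiStar (k + 1) l) ≤
        (3 / 2) * χ * B.len a' :=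
      le_trans (mul_le_mul_of_nonneg_left hsum_le hN0) harith
    -- T2
    have hT2 : N * n * d ≤ B.len a' := by
      have h17 : B.len (S.mIdx χ (k + 1)) = N * n * d := by
        rw [B.len_level (k + 1), hWc]
      have h18 := B.len_antitone (show a' ≤ S.mIdx χ (k + 1) by omega)
      rw [h17] at h18
      exact h18
    -- T3
    have hT3 : N * Δ ≤ t ^ a' := by
      have h19 : N * Δ ≤ N * S.lenk (k + 1) := by
        apply mul_le_mul_of_nonneg_left _ hN0
        rw [hlen1]
        linarith
      have h20 : (n : ℝ) * (N * S.lenk (k + 1)) ≤ N * S.dstar k := by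
        have h21 : (n : ℝ) * S.lenk (k + 1) ≤ S.dstar k := by
          rw [S.dstar_eq_sum k]
          have h22 : 0 ≤ ∑ l ∈ Finset.Icc 1 (n - 1), S.ξ (k + 1) l :=
            Finset.sum_nonneg fun l hl => S.hξ (k + 1) (by omega) l (by
              rw [Finset.mem_Icc] at hl; omega)
          linarith
        calc (n : ℝ) * (N * S.lenk (k + 1)) = N * ((n:ℝ) * S.lenk (k + 1)) := by ring
          _ ≤ N * S.dstar k := mul_le_mul_of_nonneg_left h21 hN0
      have h23 : N * S.dstar k ≤ t ^ (S.mIdx χ k - 1) := by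
        have h6 := le_trans
          (B.len_antitone (show S.mIdx χ k - 1 ≤ S.mIdx χ k by omega)) (hyp k hkK)
        rw [B.len_level k] at h6
        exact h6
      have h24 : (1:ℝ) ≤ t ^ i * (n:ℝ) := by
        have h25a : (1:ℝ) ≤ t * (Mconst χ : ℝ) := by nlinarith [ht1, hM3']
        have h25 : (1:ℝ) ≤ (t * (Mconst χ : ℝ)) ^ i := one_le_pow₀ h25a
        have h26 : (t * (Mconst χ : ℝ)) ^ i = t ^ i * (Mconst χ : ℝ) ^ i := mul_pow _ _ _
        have h27 : t ^ i * (Mconst χ : ℝ) ^ i ≤ t ^ i * (n:ℝ) :=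
          mul_le_mul_of_nonneg_left hMn (by positivity)
        linarith [h25, h26 ▸ h25]
      have hnpos : (0:ℝ) < (n:ℝ) := by positivity
      have hNlenk : 0 ≤ N * S.lenk (k + 1) := mul_nonneg hN0 (S.lenk_pos (k+1)).le
      -- N * Δ ≤ N*lenk ≤ (N dstar k)/n ≤ t^(mIdx k - 1) * t^i = t^a'
      have h28 : N * S.lenk (k + 1) ≤ t ^ (S.mIdx χ k - 1) * t ^ i := by
        have h29 : N * S.lenk (k + 1) * (n:ℝ) ≤ t ^ (S.mIdx χ k - 1) := by
          calc N * S.lenk (k + 1) * (n:ℝ) = (n:ℝ) * (N * S.lenk (k + 1)) := by ring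
            _ ≤ N * S.dstar k := h20
            _ ≤ t ^ (S.mIdx χ k - 1) := h23
        calc N * S.lenk (k + 1) = N * S.lenk (k + 1) * 1 := by ring
          _ ≤ N * S.lenk (k + 1) * (t ^ i * (n:ℝ)) := by
              apply mul_le_mul_of_nonneg_left h24 hNlenk
          _ = (N * S.lenk (k + 1) * (n:ℝ)) * t ^ i := by ring
          _ ≤ t ^ (S.mIdx χ k - 1) * t ^ i := by
              apply mul_le_mul_of_nonneg_right h29 (by positivity)
      have h30 : t ^ (S.mIdx χ k - 1) * t ^ i = t ^ a' := by
        rw [← pow_add]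
        congr 1
        have h31 := mIdx_succ S χ k
        omega
      rw [h30] at h28
      linarith
    -- combine
    have hta' : t ^ a' ≤ t ^ m :=
      pow_le_pow_of_le_one ht0.le ht2.le hma
    have htm0 : (0:ℝ) < t ^ m := pow_pos ht0 m
    have hfinal : B.len m ≤ ((3/2) * χ + 2) * t ^ a' := by
      rw [hid] at h1
      have hprod : (3/2) * χ * B.len a' ≤ (3/2) * χ * t ^ a' :=
        mul_le_mul_of_nonneg_left hlena' (by linarith)
      have hexp : ((3/2) * χ + 2) * t ^ a' =
          (3/2) * χ * t ^ a' + t ^ a' + t ^ a' := by ring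
      rw [hexp]
      linarith [h1, hT1, hT2, hT3, hprod, hlena']
    calc B.len m ≤ ((3/2) * χ + 2) * t ^ a' := hfinal
      _ ≤ (2 + 2 * χ) * t ^ a' := by
          apply mul_le_mul_of_nonneg_right (by linarith) (by positivity)
      _ ≤ (2 + 2 * χ) * t ^ m := by
          apply mul_le_mul_of_nonneg_left hta' (by linarith)

end BranchSeq

section Covering

lemma coveringNumber_le_card {δ : ℝ} {E : Set ℝ} (s : Finset ℝ)
    (h : E ⊆ ⋃ x ∈ s, Metric.closedBall x δ) : coveringNumber δ E ≤ (s.card : ℕ∞) :=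
  iInf₂_le s h

lemma E_subset_Icc (S : HPS) : S.E ⊆ Set.Icc (S.a []) (S.b []) := by
  intro x hx
  have h : x ∈ S.Ek 0 := Set.mem_iInter.1 hx 0
  simp only [HPS.Ek, Set.mem_iUnion, Set.mem_setOf_eq, exists_prop] at h
  obtain ⟨σ, ⟨hσl, _⟩, hx2⟩ := h
  rw [List.length_eq_zero_iff] at hσl
  rwa [hσl] at hx2

lemma coveringNumber_E_ne_top (S : HPS) {δ : ℝ} (hδ : 0 < δ) :
    coveringNumber δ S.E ≠ ⊤ := by
  have hc : TotallyBounded S.E :=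
    TotallyBounded.subset (E_subset_Icc S) (totallyBounded_Icc _ _)
  obtain ⟨u, huf, hcov⟩ := EMetric.totallyBounded_iff.1 hc (ENNReal.ofReal δ)
    (by simp [hδ])
  have hcov' : S.E ⊆ ⋃ x ∈ huf.toFinset, Metric.closedBall x δ := by
    refine hcov.trans ?_
    apply Set.iUnion₂_subset
    intro y hy
    apply Set.subset_iUnion₂_of_subset y (huf.mem_toFinset.2 hy)
    rw [Metric.emetric_ball]
    exact Metric.ball_subset_closedBall
  exact ne_top_of_le_ne_top (by simp) (coveringNumber_le_card _ hcov')

lemma BranchSeq.coveringNumber_le_Br {S : HPS} {χ : ℝ} (B : BranchSeq S χ) {δ : ℝ} {m : ℕ}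
    (h : ∀ p ∈ B.Br m, p.2 - p.1 ≤ 2 * δ) :
    coveringNumber δ S.E ≤ ((B.Br m).card : ℕ∞) := by
  have hcov : S.E ⊆ ⋃ x ∈ (B.Br m).image (fun p : ℝ × ℝ => (p.1 + p.2) / 2),
      Metric.closedBall x δ := by
    intro y hy
    have hy2 := B.E_subset_Hset m hy
    simp only [BranchSeq.Hset, Set.mem_iUnion, exists_prop] at hy2
    obtain ⟨p, hp, hyp⟩ := hy2
    rw [Set.mem_Icc] at hyp
    simp only [Set.mem_iUnion, Metric.mem_closedBall, exists_prop]
    refine ⟨(p.1 + p.2) / 2, Finset.mem_image.2 ⟨p, hp, rfl⟩, ?_⟩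
    rw [Real.dist_eq, abs_le]
    have h3 := h p hp
    constructor <;> [linarith [hyp.1, hyp.2]; linarith [hyp.1, hyp.2]]
  calc coveringNumber δ S.E ≤ (((B.Br m).image (fun p : ℝ × ℝ => (p.1 + p.2) / 2)).card : ℕ∞) :=
        coveringNumber_le_card _ hcov
    _ ≤ ((B.Br m).card : ℕ∞) := by exact_mod_cast Finset.card_image_le

/-- pure real-number part of the covering ratio estimate -/
lemma arith_final (t Mr X : ℝ) (ht0 : 0 < t) (ht2 : t < 1) (hMr : 3 ≤ Mr) (hX1 : 1 ≤ X) :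
    ∃ s : ℝ, 0 < s ∧ s < 1 ∧ ∃ D₁ : ℝ, 0 < D₁ ∧ ∀ δ : ℝ, 0 < δ → D₁ ≤ -Real.log δ →
      ∀ (A : ℕ) (N : ℝ), 1 ≤ N → N ≤ X * t ^ A / δ → N ≤ Mr ^ (2 * (A + 1)) →
      Real.log N ≤ s * (-Real.log δ) := by
  have hL0 : 0 < -Real.log t := by
    have := Real.log_neg ht0 ht2
    linarith
  have hMr0 : (0:ℝ) < Mr := by linarith
  have hLM1 : 1 ≤ Real.log Mr := by
    have h1 : Real.log 3 ≤ Real.log Mr := (Real.log_le_log_iff (by norm_num) hMr0).2 hMr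
    have h2 : 1 ≤ Real.log 3 := by
      rw [Real.le_log_iff_exp_le (by norm_num)]
      have := Real.exp_one_lt_d9
      linarith
    linarith
  obtain ⟨L, hL⟩ : ∃ L : ℝ, L = -Real.log t := ⟨_, rfl⟩
  obtain ⟨LM, hLM⟩ : ∃ LM : ℝ, LM = Real.log Mr := ⟨_, rfl⟩
  rw [← hL] at hL0
  rw [← hLM] at hLM1
  obtain ⟨η, hη⟩ : ∃ η : ℝ, η = min (1 / (4 * LM)) (1 / (2 * L)) := ⟨_, rfl⟩
  have hη0 : 0 < η := by
    rw [hη]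
    have hLM0 : 0 < LM := by linarith
    exact lt_min (by positivity) (by positivity)
  have hηL : η * L ≤ 1 / 2 := by
    have h3 : η ≤ 1 / (2 * L) := hη ▸ min_le_right _ _
    have h4 : η * L ≤ (1 / (2 * L)) * L := mul_le_mul_of_nonneg_right h3 hL0.le
    have h5 : (1 / (2 * L)) * L = 1 / 2 := by
      field_simp
    linarith
  have hηLM : 2 * η * LM ≤ 1 / 2 := by
    have hLM0 : 0 < LM := by linarith
    have h3 : η ≤ 1 / (4 * LM) := hη ▸ min_le_left _ _
    have h4 : η * LM ≤ (1 / (4 * LM)) * LM := mul_le_mul_of_nonneg_right h3 hLM0.le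
    have h5 : (1 / (4 * LM)) * LM = 1 / 4 := by
      field_simp
    linarith
  obtain ⟨s₀, hs₀⟩ : ∃ x : ℝ, x = 1 - η * L := ⟨_, rfl⟩
  have hs₀1 : s₀ < 1 := by
    have : 0 < η * L := mul_pos hη0 hL0
    rw [hs₀]; linarith
  have hs₀h : 1 / 2 ≤ s₀ := by rw [hs₀]; linarith
  obtain ⟨c₁, hc₁⟩ : ∃ x : ℝ, x = Real.log X := ⟨_, rfl⟩
  have hc₁0 : 0 ≤ c₁ := hc₁ ▸ Real.log_nonneg hX1
  have h1s : (0:ℝ) < 1 - s₀ := by linarith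
  refine ⟨(1 + s₀) / 2, by linarith, by linarith,
    max 1 (2 * (c₁ + 2 * LM) / (1 - s₀)), by positivity, ?_⟩
  intro δ hδ0 hD₁ A N hN1 hb1 hb2
  obtain ⟨D, hD⟩ : ∃ D : ℝ, D = -Real.log δ := ⟨_, rfl⟩
  rw [← hD] at hD₁ ⊢
  have hD0 : 0 < D := lt_of_lt_of_le (by norm_num) (le_trans (le_max_left _ _) hD₁)
  have habs : c₁ + 2 * LM ≤ D * (1 - s₀) / 2 := by
    have h6 : 2 * (c₁ + 2 * LM) / (1 - s₀) ≤ D := le_trans (le_max_right _ _) hD₁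
    rw [div_le_iff₀ h1s] at h6
    linarith
  have hX0 : (0:ℝ) < X := by linarith
  rcases le_or_gt (η * D) ((A : ℕ) : ℝ) with hcase | hcase
  · -- decay bound
    have hXtA0 : (0:ℝ) < X * t ^ A / δ := div_pos (mul_pos hX0 (pow_pos ht0 A)) hδ0
    have hlog : Real.log N ≤ c₁ + (A : ℝ) * Real.log t + D := by
      have h13 : Real.log N ≤ Real.log (X * t ^ A / δ) :=
        (Real.log_le_log_iff (by linarith) hXtA0).2 hb1
      rw [Real.log_div (by positivity) (ne_of_gt hδ0),
        Real.log_mul (ne_of_gt hX0) (by positivity), Real.log_pow] at h13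
      rw [hc₁, hD]
      linarith
    have h14 : (A : ℝ) * Real.log t = -((A : ℝ) * L) := by rw [hL]; ring
    have h15 : η * D * L ≤ (A : ℝ) * L := mul_le_mul_of_nonneg_right hcase hL0.le
    have hlog2 : Real.log N ≤ c₁ + D - η * D * L := by
      rw [h14] at hlog
      linarith
    have e2 : c₁ + D - η * D * L = c₁ + D * s₀ := by rw [hs₀]; ring
    have e3 : c₁ ≤ D * (1 - s₀) / 2 := by linarith
    have e4 : D * s₀ + D * (1 - s₀) / 2 = ((1 + s₀) / 2) * D := by ring
    linarith
  · -- cardinality bound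
    have hlog2 : Real.log N ≤ (2 * (A : ℝ) + 2) * LM := by
      have h13 : Real.log N ≤ Real.log (Mr ^ (2 * (A + 1))) :=
        (Real.log_le_log_iff (by linarith) (by positivity)).2 hb2
      rw [Real.log_pow] at h13
      have h16 : ((2 * (A + 1) : ℕ) : ℝ) = 2 * (A : ℝ) + 2 := by push_cast; ring
      rw [h16] at h13
      rw [hLM]
      exact h13
    have h17 : 2 * (A : ℝ) * LM ≤ 2 * (η * D) * LM := by
      have h18 : (A : ℝ) ≤ η * D := hcase.le
      have hLM0 : (0:ℝ) ≤ LM := by linarith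
      nlinarith
    have h19 : 2 * (η * D) * LM = (2 * η * LM) * D := by ring
    have h20 : (2 * η * LM) * D ≤ (1 / 2) * D := mul_le_mul_of_nonneg_right hηLM hD0.le
    have h21 : (1 / 2) * D ≤ s₀ * D := mul_le_mul_of_nonneg_right hs₀h hD0.le
    have h22 : 2 * LM ≤ D * (1 - s₀) / 2 := by linarith
    have e4 : s₀ * D + D * (1 - s₀) / 2 = ((1 + s₀) / 2) * D := by ring
    linarith [hlog2, h17, h19 ▸ h17]

set_option maxHeartbeats 1000000 in
/-- Under the decay hypothesis, the covering ratio is eventually bounded by some `s < 1`. -/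
lemma BranchSeq.ratio_bound {S : HPS} {χ : ℝ} (B : BranchSeq S χ) (hχ : 1 ≤ χ)
    (hgap : GapComparable S χ) {t : ℝ} (ht1 : 1 / 2 ≤ t) (ht2 : t < 1) {K : ℕ} (hK : 1 ≤ K)
    (hyp : ∀ k, K ≤ k → B.len (S.mIdx χ k - 1) ≤ t ^ (S.mIdx χ k - 1)) :
    ∃ s : ℝ, 0 < s ∧ s < 1 ∧ ∃ δ₀ : ℝ, 0 < δ₀ ∧ ∀ δ : ℝ, 0 < δ → δ < δ₀ →
      Real.log (((coveringNumber δ S.E).toNat : ℕ) : ℝ) / (- Real.log δ) ≤ s := by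
  classical
  have ht0 : 0 < t := by linarith
  have hM3 : 3 ≤ Mconst χ := Mconst_ge_three χ hχ
  have hM3' : (3:ℝ) ≤ (Mconst χ : ℝ) := by exact_mod_cast hM3
  have hX1 : (1:ℝ) ≤ (Mconst χ : ℝ) ^ 2 * χ * (2 + 2 * χ) := by
    have h9 : (9:ℝ) ≤ (Mconst χ : ℝ) ^ 2 := by nlinarith
    have h10 : (9:ℝ) ≤ (Mconst χ : ℝ) ^ 2 * χ := by nlinarith
    nlinarith
  obtain ⟨s, hs0, hs1, D₁, hD₁0, harith⟩ :=
    arith_final t (Mconst χ) ((Mconst χ : ℝ) ^ 2 * χ * (2 + 2 * χ)) ht0 ht2 hM3' hX1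
  -- base level and minimal branch length among low levels
  obtain ⟨mb, hmbdef⟩ : ∃ mb : ℕ, mb = max (S.mIdx χ K) 1 := ⟨_, rfl⟩
  obtain ⟨q, hqmem⟩ : ∃ q : ℕ → ℝ × ℝ, ∀ m, q m ∈ B.Br m :=
    ⟨fun m => (B.nonempty m).choose, fun m => (B.nonempty m).choose_spec⟩
  have hrne : ((Finset.range (mb + 1)).image (fun m => (q m).2 - (q m).1)).Nonempty :=
    Finset.Nonempty.image ⟨0, Finset.mem_range.2 (by omega)⟩ _
  obtain ⟨ε₀, hε₀def⟩ :
      ∃ e : ℝ, e = ((Finset.range (mb + 1)).image (fun m => (q m).2 - (q m).1)).min' hrne :=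
    ⟨_, rfl⟩
  have hε₀pos : 0 < ε₀ := by
    obtain ⟨m, _, he⟩ := Finset.mem_image.1 (Finset.min'_mem _ hrne)
    rw [hε₀def, ← he]
    exact sub_pos.2 (B.lt m _ (hqmem m))
  have hε₀le : ∀ m, m ≤ mb → ε₀ ≤ (q m).2 - (q m).1 := fun m hm => by
    rw [hε₀def]
    exact Finset.min'_le _ _ (Finset.mem_image.2 ⟨m, Finset.mem_range.2 (by omega), rfl⟩)
  refine ⟨s, hs0, hs1, min (min (Real.exp (-D₁)) (1 / 2)) (ε₀ / 2), by positivity, ?_⟩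
  intro δ hδ0 hδlt
  have hδe : δ < Real.exp (-D₁) :=
    lt_of_lt_of_le hδlt (le_trans (min_le_left _ _) (min_le_left _ _))
  have hδh : δ < 1 / 2 :=
    lt_of_lt_of_le hδlt (le_trans (min_le_left _ _) (min_le_right _ _))
  have hδε : δ < ε₀ / 2 := lt_of_lt_of_le hδlt (min_le_right _ _)
  have hD0 : 0 < -Real.log δ := by
    have := Real.log_neg hδ0 (by linarith)
    linarith
  have hDD₁ : D₁ ≤ -Real.log δ := by
    have h6 := Real.log_lt_log hδ0 hδe
    rw [Real.log_exp] at h6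
    linarith
  -- choose the minimal level m₁ at which all branches are short
  have hexm : ∃ m : ℕ, ∀ p ∈ B.Br m, p.2 - p.1 ≤ 2 * δ := by
    obtain ⟨n₀, hn₀⟩ := exists_pow_lt_of_lt_one
      (show (0:ℝ) < 2 * δ / (2 + 2 * χ) by positivity) ht2
    refine ⟨max n₀ mb, fun p hp => ?_⟩
    have h6 : B.len (max n₀ mb) ≤ (2 + 2 * χ) * t ^ (max n₀ mb) :=
      B.len_le_pow hχ hgap ht1 ht2 hK hyp
        (le_trans (hmbdef ▸ le_max_left _ _) (le_max_right n₀ mb))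
    have h7 : t ^ (max n₀ mb) ≤ t ^ n₀ :=
      pow_le_pow_of_le_one ht0.le ht2.le (le_max_left _ _)
    have h8 := B.branch_le_len hp
    have hXp : (0:ℝ) < 2 + 2 * χ := by linarith
    have h9 : (2 + 2 * χ) * t ^ n₀ < 2 * δ := by
      have := (lt_div_iff₀ hXp).1 hn₀
      linarith
    have h9' : (2 + 2 * χ) * t ^ (max n₀ mb) ≤ (2 + 2 * χ) * t ^ n₀ :=
      mul_le_mul_of_nonneg_left h7 hXp.le
    linarith
  obtain ⟨m₁, hm₁P, hm₁min⟩ :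
      ∃ m₁ : ℕ, (∀ p ∈ B.Br m₁, p.2 - p.1 ≤ 2 * δ) ∧
        ∀ m < m₁, ¬ ∀ p ∈ B.Br m, p.2 - p.1 ≤ 2 * δ :=
    ⟨Nat.find hexm, Nat.find_spec hexm, fun m hm => Nat.find_min hexm hm⟩
  have hm₁mb : mb < m₁ := by
    by_contra hcon
    push_neg at hcon
    have h8 := hm₁P (q m₁) (hqmem m₁)
    have h9 := hε₀le m₁ hcon
    linarith
  obtain ⟨A, hA⟩ : ∃ A : ℕ, A = m₁ - 1 := ⟨_, rfl⟩
  have hAmb : mb ≤ A := by omega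
  have hA1 : m₁ = A + 1 := by omega
  have hnotP := hm₁min A (by omega)
  push_neg at hnotP
  obtain ⟨qq, hqq, hqqlen⟩ := hnotP
  have hχ0 : (0:ℝ) < χ := by linarith
  have hbound : ∀ p ∈ B.Br A, δ / χ ≤ p.2 - p.1 := by
    intro p hp
    have h10 := B.comparable A qq hqq p hp
    rw [div_le_iff₀ hχ0]
    nlinarith
  have hlenA : ((B.Br A).card : ℝ) * (δ / χ) ≤ B.len A := by
    have h11 := Finset.card_nsmul_le_sum (B.Br A) (fun p => p.2 - p.1) (δ / χ)
      (fun p hp => hbound p hp)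
    rwa [nsmul_eq_mul] at h11
  have hlenAle : B.len A ≤ (2 + 2 * χ) * t ^ A :=
    B.len_le_pow hχ hgap ht1 ht2 hK hyp (le_trans (hmbdef ▸ le_max_left _ _) hAmb)
  have hcardA : ((B.Br A).card : ℝ) ≤ χ * (2 + 2 * χ) * t ^ A / δ := by
    rw [le_div_iff₀ hδ0]
    have h12 := hlenA.trans hlenAle
    calc ((B.Br A).card : ℝ) * δ = (((B.Br A).card : ℝ) * (δ / χ)) * χ := by
          rw [mul_assoc, div_mul_cancel₀ δ hχ0.ne']
      _ ≤ ((2 + 2 * χ) * t ^ A) * χ := mul_le_mul_of_nonneg_right h12 hχ0.le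
      _ = χ * (2 + 2 * χ) * t ^ A := by ring
  have hNδBr : (coveringNumber δ S.E).toNat ≤ (B.Br m₁).card := by
    have h11 := B.coveringNumber_le_Br hm₁P
    have h12 := ENat.toNat_le_toNat h11 (by simp)
    rwa [ENat.toNat_coe] at h12
  have hcard1 : ((B.Br m₁).card : ℝ) ≤ (Mconst χ : ℝ) ^ 2 * ((B.Br A).card : ℝ) := by
    have h12 := B.card_Br_succ_le A
    rw [← hA1] at h12
    exact_mod_cast h12
  have hb1 : (((coveringNumber δ S.E).toNat : ℕ) : ℝ) ≤
      ((Mconst χ : ℝ) ^ 2 * χ * (2 + 2 * χ)) * t ^ A / δ := by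
    calc (((coveringNumber δ S.E).toNat : ℕ) : ℝ) ≤ ((B.Br m₁).card : ℝ) := by
          exact_mod_cast hNδBr
      _ ≤ (Mconst χ : ℝ) ^ 2 * ((B.Br A).card : ℝ) := hcard1
      _ ≤ (Mconst χ : ℝ) ^ 2 * (χ * (2 + 2 * χ) * t ^ A / δ) :=
          mul_le_mul_of_nonneg_left hcardA (by positivity)
      _ = ((Mconst χ : ℝ) ^ 2 * χ * (2 + 2 * χ)) * t ^ A / δ := by ring
  have hb2 : (((coveringNumber δ S.E).toNat : ℕ) : ℝ) ≤ (Mconst χ : ℝ) ^ (2 * (A + 1)) := by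
    calc (((coveringNumber δ S.E).toNat : ℕ) : ℝ) ≤ ((B.Br m₁).card : ℝ) := by
          exact_mod_cast hNδBr
      _ ≤ (((Mconst χ) ^ (2 * m₁) : ℕ) : ℝ) := by exact_mod_cast B.card_Br_le_pow m₁
      _ = (Mconst χ : ℝ) ^ (2 * (A + 1)) := by rw [← hA1]; push_cast; rfl
  rw [div_le_iff₀ hD0]
  rcases Nat.eq_zero_or_pos (coveringNumber δ S.E).toNat with hN0 | hN1
  · rw [hN0]
    simp only [Nat.cast_zero, Real.log_zero]
    positivity
  · exact harith δ hδ0 hDD₁ A _ (by exact_mod_cast hN1) hb1 hb2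

end Covering


section Dim

lemma packingDim_le_upperBoxDim (E : Set ℝ) : packingDim E ≤ upperBoxDim E := by
  have h1 : packingDim E ≤ ⨆ _i : ℕ, upperBoxDim E := by
    apply iInf₂_le (fun _ : ℕ => E)
    intro x hx
    exact Set.mem_iUnion.2 ⟨0, hx⟩
  simpa using h1

lemma upperBoxDim_le_of_ratio (S : HPS) {s : ℝ} {δ₀ : ℝ} (hδ₀ : 0 < δ₀)
    (h : ∀ δ : ℝ, 0 < δ → δ < δ₀ →
      Real.log (((coveringNumber δ S.E).toNat : ℕ) : ℝ) / (- Real.log δ) ≤ s) :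
    upperBoxDim S.E ≤ (s : EReal) := by
  unfold upperBoxDim
  rw [if_pos (fun δ hδ => coveringNumber_E_ne_top S hδ)]
  apply Filter.limsup_le_of_le (by isBoundedDefault)
  have hmem : Set.Ioo (0:ℝ) δ₀ ∈ nhdsWithin (0:ℝ) (Set.Ioi 0) :=
    Ioo_mem_nhdsGT_of_mem ⟨le_refl 0, hδ₀⟩
  filter_upwards [hmem] with δ hδ
  have h2 := h δ hδ.1 hδ.2
  exact_mod_cast h2

end Dim

end Aux

/-- **Lemma 5.1 (1).** If `dim_P E = 1`, there is a subsequence `{a_k}` of `{m_k - 1}`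
with `lim_k (l(H_{a_k}))^{1/a_k} = 1`. -/
theorem exists_subseq_len_pow_tendsto_one
    (S : HPS) (χ : ℝ) (hχ : 1 ≤ χ) (hgap : GapComparable S χ)
    (B : BranchSeq S χ)
    (hdim : packingDim S.E = 1) :
    ∃ φ : ℕ → ℕ, StrictMono φ ∧
      Filter.Tendsto
        (fun k => (B.len (S.mIdx χ (φ k) - 1)) ^ (1 / ((S.mIdx χ (φ k) - 1 : ℕ) : ℝ)))
        Filter.atTop (nhds 1) := by
  classical
  by_cases hcase : ∃ j N : ℕ, ∀ k, N ≤ k →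
      (B.len (S.mIdx χ k - 1)) ^ (1 / ((S.mIdx χ k - 1 : ℕ) : ℝ)) ≤ 1 - 1 / ((j:ℝ) + 1)
  · exfalso
    obtain ⟨j, N, hjN⟩ := hcase
    have hj1 : (0:ℝ) < 1 / ((j:ℝ) + 1) := by positivity
    set t : ℝ := max (1 - 1 / ((j:ℝ) + 1)) (1/2) with htdef
    have ht1 : 1/2 ≤ t := le_max_right _ _
    have ht2 : t < 1 := max_lt (by linarith) (by norm_num)
    have ht0 : (0:ℝ) < t := by linarith
    have hyp : ∀ k, max N 2 ≤ k → B.len (S.mIdx χ k - 1) ≤ t ^ (S.mIdx χ k - 1) := by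
      intro k hk
      have hk2 : 2 ≤ k := le_trans (le_max_right N 2) hk
      have hkN : N ≤ k := le_trans (le_max_left N 2) hk
      have he1 : 1 ≤ S.mIdx χ k - 1 := by
        have := le_mIdx S χ k
        omega
      have hxk : (B.len (S.mIdx χ k - 1)) ^ (1 / ((S.mIdx χ k - 1 : ℕ) : ℝ)) ≤ t :=
        le_trans (hjN k hkN) (le_max_left _ _)
      have henz : ((S.mIdx χ k - 1 : ℕ) : ℝ) ≠ 0 := Nat.cast_ne_zero.2 (by omega)
      have hxe : ((B.len (S.mIdx χ k - 1)) ^ (1 / ((S.mIdx χ k - 1 : ℕ) : ℝ)))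
          ^ (S.mIdx χ k - 1 : ℕ) = B.len (S.mIdx χ k - 1) := by
        rw [← Real.rpow_natCast ((B.len (S.mIdx χ k - 1)) ^ (1 / ((S.mIdx χ k - 1 : ℕ) : ℝ)))
            (S.mIdx χ k - 1)]
        rw [← Real.rpow_mul (B.len_nonneg _)]
        rw [one_div, inv_mul_cancel₀ henz, Real.rpow_one]
      calc B.len (S.mIdx χ k - 1)
          = ((B.len (S.mIdx χ k - 1)) ^ (1 / ((S.mIdx χ k - 1 : ℕ) : ℝ)))
            ^ (S.mIdx χ k - 1 : ℕ) := hxe.symm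
        _ ≤ t ^ (S.mIdx χ k - 1 : ℕ) :=
            pow_le_pow_left₀ (Real.rpow_nonneg (B.len_nonneg _) _) hxk _
    obtain ⟨s, hs0, hs1, δ₀, hδ₀, hratio⟩ :=
      B.ratio_bound hχ hgap ht1 ht2 (show 1 ≤ max N 2 by omega) hyp
    have hub := upperBoxDim_le_of_ratio S hδ₀ hratio
    have hpd := (packingDim_le_upperBoxDim S.E).trans hub
    rw [hdim] at hpd
    have hs1' : (1:ℝ) ≤ s := by exact_mod_cast hpd
    linarith
  · push_neg at hcase
    set φ : ℕ → ℕ := fun n =>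
      Nat.rec (hcase 0 0).choose (fun n ih => (hcase (n + 1) (ih + 1)).choose) n with hφdef
    have hmono : ∀ n, φ n < φ (n + 1) := by
      intro n
      have h := (hcase (n + 1) (φ n + 1)).choose_spec.1
      have he : φ (n + 1) = (hcase (n + 1) (φ n + 1)).choose := rfl
      omega
    have hlow : ∀ n : ℕ, 1 - 1 / ((n:ℝ) + 1) <
        (B.len (S.mIdx χ (φ n) - 1)) ^ (1 / ((S.mIdx χ (φ n) - 1 : ℕ) : ℝ)) := by
      intro n
      cases n with
      | zero => exact (hcase 0 0).choose_spec.2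
      | succ n =>
          have h := (hcase (n + 1) (φ n + 1)).choose_spec.2
          have he : φ (n + 1) = (hcase (n + 1) (φ n + 1)).choose := rfl
          rw [he]
          exact_mod_cast h
    have hsm : StrictMono φ := strictMono_nat_of_lt_succ hmono
    refine ⟨φ, hsm, ?_⟩
    set U : ℝ := max 1 (B.len 0) with hU
    have hU1 : (1:ℝ) ≤ U := le_max_left _ _
    have hU0 : (0:ℝ) < U := by linarith
    have hupper : ∀ n, (B.len (S.mIdx χ (φ n) - 1)) ^ (1 / ((S.mIdx χ (φ n) - 1 : ℕ) : ℝ))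
        ≤ U ^ (1 / ((S.mIdx χ (φ n) - 1 : ℕ) : ℝ)) := by
      intro n
      apply Real.rpow_le_rpow (B.len_nonneg _) _ (by positivity)
      exact le_trans (B.len_antitone (Nat.zero_le _)) (le_max_right 1 _)
    have hexp : Filter.Tendsto (fun n => 1 / ((S.mIdx χ (φ n) - 1 : ℕ) : ℝ))
        Filter.atTop (nhds 0) := by
      have hnat : Filter.Tendsto (fun n => ((S.mIdx χ (φ n) - 1 : ℕ) : ℝ))
          Filter.atTop Filter.atTop := by
        apply Filter.tendsto_atTop.2
        intro b
        obtain ⟨b', hb'⟩ := exists_nat_ge b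
        filter_upwards [Filter.eventually_ge_atTop (b' + 1)] with n hn
        have h1 : n ≤ φ n := hsm.le_apply
        have h2 := le_mIdx S χ (φ n)
        have h3 : b' ≤ S.mIdx χ (φ n) - 1 := by omega
        calc b ≤ (b' : ℝ) := hb'
          _ ≤ _ := by exact_mod_cast h3
      simpa only [one_div, Pi.inv_def] using hnat.inv_tendsto_atTop
    have hUlim : Filter.Tendsto (fun n => U ^ (1 / ((S.mIdx χ (φ n) - 1 : ℕ) : ℝ)))
        Filter.atTop (nhds 1) := by
      have hcont : ContinuousAt (fun y : ℝ => U ^ y) 0 :=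
        Real.continuousAt_const_rpow (ne_of_gt hU0)
      have h4 := hcont.tendsto.comp hexp
      simpa [Real.rpow_zero, Function.comp_def] using h4
    have hllim : Filter.Tendsto (fun n : ℕ => 1 - 1 / ((n:ℝ) + 1))
        Filter.atTop (nhds 1) := by
      have h : Filter.Tendsto (fun n : ℕ => 1 / ((n : ℝ) + 1)) Filter.atTop (nhds 0) :=
        tendsto_one_div_add_atTop_nhds_zero_nat
      have h5 := h.const_sub 1
      simpa using h5
    exact tendsto_of_tendsto_of_tendsto_of_le_of_le hllim hUlim
      (fun n => (hlow n).le) hupper
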